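/- arXiv:1712.09013 — 11 statements merged into one kernel-verified Lean document; each statement's English description precedes it below -/
import Mathlib

section
/- Let c(t,m) = (1+t)^2 * exp(-(1+t)*m) for t ≥ 0 and m > 0. Then c(0,m) = exp(-m), for every t ≥ 0 and m > 0 the function n ↦ c(t,n) is integrable on (m,∞), and c satisfies the binary fragmentation equation with linear breakage rate: ∂c/∂t(t,m) = -m * c(t,m) + 2 * ∫_m^∞ c(t,n) dn. -/
open Real MeasureTheory

lemma exp_int (b m : ℝ) (hb : 0 < b) :
    ∫ n in Set.Ioi m, Real.exp (-b * n) = Real.exp (-b * m) / b := by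
  have hderiv : ∀ x ∈ Set.Ici m, HasDerivAt (fun x => -Real.exp (-b * x) / b)
      (Real.exp (-b * x)) x := by
    intro x _
    have h : HasDerivAt (fun x => Real.exp (-b * x)) (Real.exp (-b * x) * (-b)) x := by
      have := (Real.hasDerivAt_exp (-b * x)).comp x ((hasDerivAt_id x).const_mul (-b))
      simpa [Function.comp_def, mul_comm] using this
    have := (h.neg.div_const b)
    refine this.congr_deriv ?_
    rw [div_eq_iff hb.ne']; ring
  have hint : IntegrableOn (fun x => Real.exp (-b * x)) (Set.Ioi m) :=
    exp_neg_integrableOn_Ioi m hb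
  have htend : Filter.Tendsto (fun x => -Real.exp (-b * x) / b) Filter.atTop (nhds 0) := by
    have : Filter.Tendsto (fun x => Real.exp (-b * x)) Filter.atTop (nhds 0) := by
      have h1 : Filter.Tendsto (fun x : ℝ => b * x) Filter.atTop Filter.atTop :=
        Filter.Tendsto.const_mul_atTop hb Filter.tendsto_id
      simpa [Function.comp_def, neg_mul] using Real.tendsto_exp_neg_atTop_nhds_zero.comp h1
    simpa using (this.neg.div_const b)
  have := MeasureTheory.integral_Ioi_of_hasDerivAt_of_tendsto' hderiv hint htend
  rw [this]
  field_simp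
  ring

/-- The exponential-initial-condition solution `c(t,m) = (1+t)^2 exp(-(1+t)m)` of the
binary fragmentation equation with linear breakage rate. -/
theorem stmt_0 (c : ℝ → ℝ → ℝ)
    (hc : ∀ t m : ℝ, c t m = (1 + t) ^ 2 * Real.exp (-(1 + t) * m)) :
    (∀ m : ℝ, 0 < m → c 0 m = Real.exp (-m)) ∧
    (∀ t : ℝ, 0 ≤ t → ∀ m : ℝ, 0 < m →
      IntegrableOn (fun n => c t n) (Set.Ioi m) ∧
      HasDerivAt (fun s => c s m)
        (-m * c t m + 2 * ∫ n in Set.Ioi m, c t n) t) := by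
  constructor
  · intro m _; simp [hc]
  · intro t ht m _
    have hb : 0 < 1 + t := by linarith
    constructor
    · simp only [hc]
      exact (exp_neg_integrableOn_Ioi m hb).const_mul _
    · have hI : (∫ n in Set.Ioi m, c t n) = (1 + t) * Real.exp (-(1 + t) * m) := by
        simp only [hc]
        rw [MeasureTheory.integral_const_mul, exp_int _ _ hb]
        field_simp
      have key : HasDerivAt (fun s => (1 + s) ^ 2 * Real.exp (-(1 + s) * m))
          (-m * c t m + 2 * ((1 + t) * Real.exp (-(1 + t) * m))) t := by
        have h1 : HasDerivAt (fun s : ℝ => (1 + s) ^ 2) (2 * (1 + t)) t := by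
          have := ((hasDerivAt_id t).const_add 1).pow 2
          exact this.congr_deriv (by simp)
        have h2 : HasDerivAt (fun s : ℝ => Real.exp (-(1 + s) * m))
            (Real.exp (-(1 + t) * m) * (-m)) t := by
          have hin : HasDerivAt (fun s : ℝ => -(1 + s) * m) (-m) t := by
            have := (((hasDerivAt_id t).const_add 1).neg.mul_const m)
            simpa using this
          exact (Real.hasDerivAt_exp _).comp t hin
        have := h1.mul h2
        refine this.congr_deriv ?_
        rw [hc]
        ring
      rw [hI]
      have : (fun s => c s m) = fun s => (1 + s) ^ 2 * Real.exp (-(1 + s) * m) := by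
        funext s; exact hc s m
      rw [this]
      exact key
end

section
/- Let c(t,m) = exp(-t*m) * (2*t + t^2*(1-m)) for t ≥ 0 and 0 < m < 1. Then c(0,m) = 0 and for every t ≥ 0 and 0 < m < 1: ∂c/∂t(t,m) = -m * c(t,m) + 2 * ∫_m^1 c(t,n) dn + 2 * exp(-t). -/
open Real MeasureTheory

/-- The regular part `c(t,m) = exp(-tm)(2t + t^2(1-m))` of the Ziff–McGrady solution
for random binary fragmentation with linear rate and monodisperse initial condition. -/
theorem stmt_1 (c : ℝ → ℝ → ℝ)
    (hc : ∀ t m : ℝ, c t m = Real.exp (-t * m) * (2 * t + t ^ 2 * (1 - m))) :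
    (∀ m : ℝ, 0 < m → m < 1 → c 0 m = 0) ∧
    (∀ t : ℝ, 0 ≤ t → ∀ m : ℝ, 0 < m → m < 1 →
      HasDerivAt (fun s => c s m)
        (-m * c t m + 2 * (∫ n in m..1, c t n) + 2 * Real.exp (-t)) t) := by
  constructor
  · intro m _ _
    simp [hc]
  · intro t ht m hm0 hm1
    -- antiderivative in n
    have hF : ∀ n : ℝ, HasDerivAt (fun n => -(Real.exp (-t * n) * (1 + t * (1 - n))))
        (Real.exp (-t * n) * (2 * t + t ^ 2 * (1 - n))) n := by
      intro n
      have h1 : HasDerivAt (fun n : ℝ => -t * n) (-t) n := by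
        simpa using (hasDerivAt_id n).const_mul (-t)
      have h2 : HasDerivAt (fun n : ℝ => Real.exp (-t * n)) (Real.exp (-t * n) * (-t)) n :=
        (Real.hasDerivAt_exp (-t * n)).comp n h1
      have h3 : HasDerivAt (fun n : ℝ => 1 + t * (1 - n)) (-t) n := by
        have : HasDerivAt (fun n : ℝ => 1 - n) (-1) n := by
          simpa using (hasDerivAt_id n).const_sub 1
        simpa using (this.const_mul t).const_add 1
      have h4 : HasDerivAt (fun n => -(Real.exp (-t * n) * (1 + t * (1 - n))))
          (-(Real.exp (-t * n) * -t * (1 + t * (1 - n)) + Real.exp (-t * n) * -t)) n :=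
        (h2.mul h3).neg
      convert h4 using 1
      ring
    have hcont : Continuous (fun n => Real.exp (-t * n) * (2 * t + t ^ 2 * (1 - n))) := by
      fun_prop
    have hint : (∫ n in m..1, c t n)
        = Real.exp (-t * m) * (1 + t * (1 - m)) - Real.exp (-t) := by
      have := intervalIntegral.integral_eq_sub_of_hasDerivAt
        (f := fun n => -(Real.exp (-t * n) * (1 + t * (1 - n))))
        (f' := fun n => Real.exp (-t * n) * (2 * t + t ^ 2 * (1 - n)))
        (a := m) (b := 1) (fun n _ => hF n)
        (hcont.intervalIntegrable m 1)
      simp only [hc]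
      rw [this]
      simp
      ring
    -- derivative in t
    have h1 : HasDerivAt (fun s : ℝ => -s * m) (-m) t := by
      simpa using ((hasDerivAt_id t).neg.mul_const m)
    have h2 : HasDerivAt (fun s : ℝ => Real.exp (-s * m)) (Real.exp (-t * m) * (-m)) t :=
      by have := (Real.hasDerivAt_exp (-t * m)).comp t h1; exact this
    have h3 : HasDerivAt (fun s : ℝ => 2 * s + s ^ 2 * (1 - m)) (2 + 2 * t * (1 - m)) t := by
      have ha : HasDerivAt (fun s : ℝ => 2 * s) 2 t := by
        simpa using (hasDerivAt_id t).const_mul 2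
      have hb : HasDerivAt (fun s : ℝ => s ^ 2 * (1 - m)) (2 * t * (1 - m)) t := by
        simpa using (hasDerivAt_pow 2 t).mul_const (1 - m)
      exact ha.add hb
    have h4 := h2.mul h3
    have key : HasDerivAt (fun s => c s m)
        (Real.exp (-t * m) * (-m) * (2 * t + t ^ 2 * (1 - m))
          + Real.exp (-t * m) * (2 + 2 * t * (1 - m))) t := by
      simp only [hc]
      exact h4
    convert key using 1
    rw [hint, hc]
    ring
end

section
/- Fix a real number α > 0. Let c(t,m) = exp(-m - t*m^α) * (1 + α*t*(m^(α-2) + m^(α-1))) for t ≥ 0 and m > 0. Then c(0,m) = exp(-m), for every t ≥ 0 and m > 0 the function n ↦ n * c(t,n) is integrable on (m,∞), and c satisfies ∂c/∂t(t,m) = -m^α * c(t,m) + α * m^(α-2) * ∫_m^∞ n * c(t,n) dn. -/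
open Real MeasureTheory

/-- The exponential-initial-condition solution of the k-nary fragmentation equation with
power-law rate `a(m) = m^α` and fragment distribution `k(m|n) = (α/n)(m/n)^(α-2)`. -/
theorem stmt_2 (α : ℝ) (hα : 0 < α) (c : ℝ → ℝ → ℝ)
    (hc : ∀ t m : ℝ, c t m =
      Real.exp (-m - t * m ^ α) * (1 + α * t * (m ^ (α - 2) + m ^ (α - 1)))) :
    (∀ m : ℝ, 0 < m → c 0 m = Real.exp (-m)) ∧
    (∀ t : ℝ, 0 ≤ t → ∀ m : ℝ, 0 < m →
      IntegrableOn (fun n => n * c t n) (Set.Ioi m) ∧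
      HasDerivAt (fun s => c s m)
        (-m ^ α * c t m + α * m ^ (α - 2) * ∫ n in Set.Ioi m, n * c t n) t) := by
  constructor
  · intro m hm
    rw [hc]; simp
  intro t ht m hm
  -- the antiderivative (negated)
  set g : ℝ → ℝ := fun x => -((1 + x) * Real.exp (-x - t * x ^ α)) with hg
  have hderiv : ∀ x ∈ Set.Ici m, HasDerivAt g (x * c t x) x := by
    intro x hx
    have hx0 : 0 < x := lt_of_lt_of_le hm hx
    have hx1 : x * x ^ (α - 2) = x ^ (α - 1) := by
      have h := (Real.rpow_add hx0 1 (α - 2)).symm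
      rw [Real.rpow_one] at h
      rw [h, show (1 : ℝ) + (α - 2) = α - 1 by ring]
    have hinner : HasDerivAt (fun y : ℝ => -y - t * y ^ α)
        (-1 - t * (α * x ^ (α - 1))) x := by
      have h1 : HasDerivAt (fun y : ℝ => y ^ α) (α * x ^ (α - 1)) x :=
        Real.hasDerivAt_rpow_const (Or.inl hx0.ne')
      simpa using ((hasDerivAt_id' x).fun_neg.fun_sub ((h1.const_mul t)))
    have hexp : HasDerivAt (fun y : ℝ => Real.exp (-y - t * y ^ α))
        ((-1 - t * (α * x ^ (α - 1))) * Real.exp (-x - t * x ^ α)) x := by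
      simpa [mul_comm] using hinner.exp
    have hprod : HasDerivAt (fun y : ℝ => (1 + y) * Real.exp (-y - t * y ^ α))
        (1 * Real.exp (-x - t * x ^ α) +
          (1 + x) * ((-1 - t * (α * x ^ (α - 1))) * Real.exp (-x - t * x ^ α))) x := by
      simpa using ((hasDerivAt_const x (1:ℝ)).fun_add (hasDerivAt_id' x)).fun_mul hexp
    refine hprod.neg.congr_deriv (Eq.symm ?_)
    rw [hc t x]
    linear_combination (α * t * Real.exp (-x - t * x ^ α)) * hx1
  have hpos : ∀ x ∈ Set.Ioi m, 0 ≤ x * c t x := by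
    intro x hx
    have hx0 : 0 < x := lt_trans hm hx
    rw [hc]
    positivity
  have htend : Filter.Tendsto g Filter.atTop (nhds 0) := by
    have hF : Filter.Tendsto (fun x => (1 + x) * Real.exp (-x - t * x ^ α))
        Filter.atTop (nhds 0) := by
      have hub : Filter.Tendsto (fun x : ℝ => Real.exp (-x) + x * Real.exp (-x))
          Filter.atTop (nhds 0) := by
        have h1 := Real.tendsto_exp_neg_atTop_nhds_zero
        have h2 := Real.tendsto_pow_mul_exp_neg_atTop_nhds_zero 1
        simpa using h1.add h2
      refine tendsto_of_tendsto_of_tendsto_of_le_of_le' tendsto_const_nhds hub ?_ ?_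
      · filter_upwards [Filter.eventually_gt_atTop (0:ℝ)] with x hx0
        positivity
      · filter_upwards [Filter.eventually_gt_atTop (0:ℝ)] with x hx0
        have hle : Real.exp (-x - t * x ^ α) ≤ Real.exp (-x) := by
          apply Real.exp_le_exp.mpr
          nlinarith [Real.rpow_nonneg hx0.le α]
        nlinarith [Real.exp_pos (-x - t * x ^ α), Real.exp_pos (-x)]
    simpa using hF.neg
  have hInt : IntegrableOn (fun n => n * c t n) (Set.Ioi m) :=
    integrableOn_Ioi_deriv_of_nonneg' hderiv hpos htend
  have hIval : ∫ n in Set.Ioi m, n * c t n = (1 + m) * Real.exp (-m - t * m ^ α) := by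
    rw [integral_Ioi_of_hasDerivAt_of_nonneg' hderiv hpos htend, hg]
    ring
  refine ⟨hInt, ?_⟩
  -- time derivative
  have hm1 : m * m ^ (α - 2) = m ^ (α - 1) := by
    have h := (Real.rpow_add hm 1 (α - 2)).symm
    rw [Real.rpow_one] at h
    rw [h, show (1 : ℝ) + (α - 2) = α - 1 by ring]
  have hE : HasDerivAt (fun s : ℝ => Real.exp (-m - s * m ^ α))
      (-(m ^ α) * Real.exp (-m - t * m ^ α)) t := by
    have h1 : HasDerivAt (fun s : ℝ => -m - s * m ^ α) (-(m ^ α)) t :=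
      (hasDerivAt_mul_const (m ^ α)).const_sub (-m)
    simpa [mul_comm] using h1.exp
  have hL : HasDerivAt (fun s : ℝ => 1 + α * s * (m ^ (α - 2) + m ^ (α - 1)))
      (α * (m ^ (α - 2) + m ^ (α - 1))) t := by
    have h := (hasDerivAt_mul_const (α * (m ^ (α - 2) + m ^ (α - 1)))).const_add (1 : ℝ) (x := t)
    have h2 : (fun s : ℝ => 1 + α * s * (m ^ (α - 2) + m ^ (α - 1))) =
        fun s : ℝ => 1 + s * (α * (m ^ (α - 2) + m ^ (α - 1))) := by
      funext s; ring
    rw [h2]; exact h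
  have hprod := hE.fun_mul hL
  have heq : (fun s => c s m) = fun s =>
      Real.exp (-m - s * m ^ α) * (1 + α * s * (m ^ (α - 2) + m ^ (α - 1))) := by
    funext s; exact hc s m
  rw [heq]
  refine hprod.congr_deriv (Eq.symm ?_)
  rw [hIval, hc t m]
  linear_combination (α * Real.exp (-m - t * m ^ α)) * hm1
end

section
/- Let c(t,m) = 2*t*exp(-t*m^2) for t ≥ 0 and 0 < m < 1. Then c(0,m) = 0 and for every t ≥ 0 and 0 < m < 1: ∂c/∂t(t,m) = -m^2 * c(t,m) + 2 * ∫_m^1 n * c(t,n) dn + 2 * exp(-t). -/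
open Real MeasureTheory

lemma integral_key (t m : ℝ) :
    (∫ n in m..1, n * (2 * t * Real.exp (-t * n ^ 2)))
      = Real.exp (-t * m ^ 2) - Real.exp (-t) := by
  have h : ∀ n ∈ Set.uIcc m 1,
      HasDerivAt (fun x : ℝ => -Real.exp (-t * x ^ 2))
        (n * (2 * t * Real.exp (-t * n ^ 2))) n := by
    intro n _
    have h1 : HasDerivAt (fun x : ℝ => -t * x ^ 2) (-t * (2 * n)) n := by
      simpa using ((hasDerivAt_pow 2 n).const_mul (-t))
    have h2 := (h1.exp).neg
    refine h2.congr_deriv ?_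
    ring
  have := intervalIntegral.integral_eq_sub_of_hasDerivAt h (by
    apply Continuous.intervalIntegrable
    continuity)
  rw [this]
  ring_nf

/-- The regular part `c(t,m) = 2t exp(-t m^2)` of the Ziff–McGrady solution for random
binary fragmentation with quadratic rate and monodisperse initial condition. -/
theorem stmt_3 (c : ℝ → ℝ → ℝ)
    (hc : ∀ t m : ℝ, c t m = 2 * t * Real.exp (-t * m ^ 2)) :
    (∀ m : ℝ, 0 < m → m < 1 → c 0 m = 0) ∧
    (∀ t : ℝ, 0 ≤ t → ∀ m : ℝ, 0 < m → m < 1 →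
      HasDerivAt (fun s => c s m)
        (-m ^ 2 * c t m + 2 * (∫ n in m..1, n * c t n) + 2 * Real.exp (-t)) t) := by
  constructor
  · intro m _ _; simp [hc]
  · intro t _ m _ _
    have hfun : (fun s => c s m) = fun s => 2 * s * Real.exp (-s * m ^ 2) := by
      funext s; exact hc s m
    have hint : (∫ n in m..1, n * c t n)
        = Real.exp (-t * m ^ 2) - Real.exp (-t) := by
      rw [show (fun n => n * c t n) = fun n => n * (2 * t * Real.exp (-t * n ^ 2)) by
        funext n; rw [hc]]
      exact integral_key t m
    have h1 : HasDerivAt (fun s : ℝ => -s * m ^ 2) (-m ^ 2) t := by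
      simpa using (hasDerivAt_id t).neg.mul_const (m ^ 2)
    have h2 : HasDerivAt (fun s : ℝ => Real.exp (-s * m ^ 2))
        (Real.exp (-t * m ^ 2) * (-m ^ 2)) t := h1.exp
    have h3 : HasDerivAt (fun s : ℝ => 2 * s) 2 t := by
      simpa using (hasDerivAt_id t).const_mul 2
    have h4 := h3.mul h2
    rw [hfun, hc, hint]
    refine h4.congr_deriv ?_
    ring
end

section
/- Fix a real number α > 0. Define u_0(t,m) = exp(-m) and, for k ≥ 1, u_k(t,m) = ((-t)^k * m^(α*k-2) / k!) * (m^2 - α*k*(1+m)) * exp(-m). Then for every k ≥ 1, t ≥ 0 and m > 0: u_k(0,m) = 0, the function n ↦ n * u_{k-1}(t,n) is integrable on (m,∞), and ∂u_k/∂t(t,m) = -m^α * u_{k-1}(t,m) + α * m^(α-2) * ∫_m^∞ n * u_{k-1}(t,n) dn. -/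
open Real MeasureTheory Set Filter

lemma intA (s m : ℝ) (hm : 0 < m) :
    IntegrableOn (fun n : ℝ => n ^ s * Real.exp (-n)) (Set.Ioi m) := by
  set s' : ℝ := max s 1 with hs'def
  have hs' : 0 < s' := lt_of_lt_of_le one_pos (le_max_right _ _)
  have hG : IntegrableOn (fun x : ℝ => Real.exp (-x) * x ^ (s' + 1 - 1)) (Set.Ioi 0) :=
    Real.GammaIntegral_convergent (by linarith)
  have hG' : IntegrableOn (fun x : ℝ => m ^ (s - s') * (Real.exp (-x) * x ^ (s' + 1 - 1)))
      (Set.Ioi m) :=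
    ((hG.mono_set (Set.Ioi_subset_Ioi hm.le)).const_mul _)
  refine hG'.integrable.mono' ?_ ?_
  · refine (ContinuousOn.mul ?_ ?_).aestronglyMeasurable measurableSet_Ioi
    · exact ContinuousOn.rpow_const continuousOn_id
        (fun x hx => Or.inl (ne_of_gt (lt_trans hm hx)))
    · exact (continuous_exp.comp continuous_neg).continuousOn
  · filter_upwards [ae_restrict_mem measurableSet_Ioi] with x hx
    have hx0 : 0 < x := lt_trans hm hx
    rw [Real.norm_eq_abs, abs_of_nonneg (by positivity)]
    have h1 : x ^ s = x ^ (s - s') * x ^ s' := by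
      rw [← Real.rpow_add hx0]; ring_nf
    have h2 : x ^ (s - s') ≤ m ^ (s - s') :=
      Real.rpow_le_rpow_of_nonpos hm (le_of_lt hx)
        (sub_nonpos.mpr (le_max_left s 1))
    calc x ^ s * Real.exp (-x) = x ^ (s - s') * (x ^ s' * Real.exp (-x)) := by rw [h1]; ring
      _ ≤ m ^ (s - s') * (x ^ s' * Real.exp (-x)) := by
          apply mul_le_mul_of_nonneg_right h2 (by positivity)
      _ = m ^ (s - s') * (Real.exp (-x) * x ^ (s' + 1 - 1)) := by ring_nf
lemma intB (s m : ℝ) (hm : 0 < m) :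
    IntegrableOn (fun n : ℝ => (n ^ (s + 1) - s * n ^ s - s * n ^ (s - 1)) * Real.exp (-n))
      (Set.Ioi m) := by
  have h1 := intA (s + 1) m hm
  have h2 := (intA s m hm).const_mul s
  have h3 := (intA (s - 1) m hm).const_mul s
  have := (h1.sub h2).sub h3
  refine IntegrableOn.congr_fun this (fun n _ => ?_) measurableSet_Ioi
  simp only [Pi.sub_apply]; ring

lemma valB (s m : ℝ) (hm : 0 < m) :
    ∫ n in Set.Ioi m, (n ^ (s + 1) - s * n ^ s - s * n ^ (s - 1)) * Real.exp (-n)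
      = (m ^ s + m ^ (s + 1)) * Real.exp (-m) := by
  have key : ∫ n in Set.Ioi m, (n ^ (s + 1) - s * n ^ s - s * n ^ (s - 1)) * Real.exp (-n)
      = 0 - (-((m ^ s + m ^ (s + 1)) * Real.exp (-m))) := by
    apply integral_Ioi_of_hasDerivAt_of_tendsto'
      (f := fun n => -((n ^ s + n ^ (s + 1)) * Real.exp (-n)))
    · intro x hx
      have hx0 : 0 < x := lt_of_lt_of_le hm hx
      have ha : HasDerivAt (fun n : ℝ => n ^ s) (s * x ^ (s - 1)) x :=
        Real.hasDerivAt_rpow_const (Or.inl (ne_of_gt hx0))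
      have hb : HasDerivAt (fun n : ℝ => n ^ (s + 1)) ((s + 1) * x ^ (s + 1 - 1)) x :=
        Real.hasDerivAt_rpow_const (Or.inl (ne_of_gt hx0))
      have he : HasDerivAt (fun n : ℝ => Real.exp (-n)) (Real.exp (-x) * (-1)) x :=
        (hasDerivAt_neg x).exp
      have := (((ha.add hb).mul he).neg)
      convert this using 1
      · rfl
      have e1 : x ^ (s + 1) = x ^ s * x := by
        rw [Real.rpow_add hx0, Real.rpow_one]
      have e2 : x ^ s = x ^ (s - 1) * x := by
        rw [← Real.rpow_add_one (ne_of_gt hx0)]; ring_nf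
      have e3 : x ^ (s + 1 - 1) = x ^ s := by norm_num
      simp only [Pi.add_apply]; rw [e3, e1, e2]; ring
    · exact intB s m hm
    · have t1 : Tendsto (fun n : ℝ => n ^ s * Real.exp (-n)) atTop (nhds 0) := by
        have := tendsto_rpow_mul_exp_neg_mul_atTop_nhds_zero s 1 one_pos
        simpa using this
      have t2 : Tendsto (fun n : ℝ => n ^ (s + 1) * Real.exp (-n)) atTop (nhds 0) := by
        have := tendsto_rpow_mul_exp_neg_mul_atTop_nhds_zero (s + 1) 1 one_pos
        simpa using this
      have := (t1.add t2).neg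
      simp only [add_zero, neg_zero] at this
      convert this using 2 with n
      ring
  rw [key]; ring

/-- Closed form of the HPM coefficients for the k-nary fragmentation equation with
power-law rate `a(m) = m^α`, fragment distribution `k(m|n) = (α/n)(m/n)^(α-2)` and
exponential initial condition. -/
theorem stmt_5 (α : ℝ) (hα : 0 < α) (u : ℕ → ℝ → ℝ → ℝ)
    (hu0 : ∀ t m : ℝ, u 0 t m = Real.exp (-m))
    (huk : ∀ k : ℕ, 1 ≤ k → ∀ t m : ℝ,
      u k t m = ((-t) ^ k * m ^ (α * (k : ℝ) - 2) / (Nat.factorial k : ℝ)) *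
        (m ^ 2 - α * (k : ℝ) * (1 + m)) * Real.exp (-m)) :
    ∀ k : ℕ, 1 ≤ k → ∀ t : ℝ, 0 ≤ t → ∀ m : ℝ, 0 < m →
      u k 0 m = 0 ∧
      IntegrableOn (fun n => n * u (k - 1) t n) (Set.Ioi m) ∧
      HasDerivAt (fun s => u k s m)
        (-m ^ α * u (k - 1) t m +
          α * m ^ (α - 2) * ∫ n in Set.Ioi m, n * u (k - 1) t n) t := by
  -- unified closed form for all j ≥ 0
  have hufor : ∀ (j : ℕ) (t n : ℝ), 0 < n →
      u j t n = ((-t) ^ j * n ^ (α * (j : ℝ) - 2) / (Nat.factorial j : ℝ)) *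
        (n ^ 2 - α * (j : ℝ) * (1 + n)) * Real.exp (-n) := by
    intro j t n hn
    rcases Nat.eq_zero_or_pos j with rfl | hj
    · rw [hu0]
      have h1 : α * ((0 : ℕ) : ℝ) - 2 = -2 := by push_cast; ring
      rw [h1, Real.rpow_neg hn.le, Real.rpow_two]
      simp
      field_simp
    · exact huk j hj t n
  intro k hk t ht m hm
  obtain ⟨j, rfl⟩ : ∃ j, k = j + 1 := ⟨k - 1, (Nat.succ_pred_eq_of_pos hk).symm⟩
  simp only [Nat.add_sub_cancel]
  set s : ℝ := α * (j : ℝ) with hs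
  have hsnn : 0 ≤ s := by positivity
  -- pointwise rewriting of the integrand
  have hcong : ∀ n ∈ Set.Ioi m, ((-t) ^ j / (Nat.factorial j : ℝ)) *
      ((n ^ (s + 1) - s * n ^ s - s * n ^ (s - 1)) * Real.exp (-n)) = n * u j t n := by
    intro n hn
    have hn0 : 0 < m := hm
    have hnpos : 0 < n := lt_trans hm hn
    rw [hufor j t n hnpos]
    have e1 : n ^ (s + 1) = n ^ s * n := Real.rpow_add_one hnpos.ne' s
    have e2 : n ^ s = n ^ (s - 1) * n := by
      rw [← Real.rpow_add_one hnpos.ne' (s - 1)]; norm_num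
    have e3 : n ^ (s - 1) = n ^ (s - 2) * n := by
      rw [← Real.rpow_add_one hnpos.ne' (s - 2)]; congr 1; ring
    rw [e1, e2, e3]
    ring
  have hintB := intB s m hm
  have hint : IntegrableOn (fun n => n * u j t n) (Set.Ioi m) := by
    refine IntegrableOn.congr_fun (hintB.const_mul ((-t) ^ j / (Nat.factorial j : ℝ)))
      (fun n hn => hcong n hn) measurableSet_Ioi
  have hval : ∫ n in Set.Ioi m, n * u j t n =
      ((-t) ^ j / (Nat.factorial j : ℝ)) * ((m ^ s + m ^ (s + 1)) * Real.exp (-m)) := by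
    rw [← setIntegral_congr_fun measurableSet_Ioi (fun n hn => hcong n hn),
      MeasureTheory.integral_const_mul, valB s m hm]
  refine ⟨?_, hint, ?_⟩
  · rw [huk (j + 1) (by omega)]
    simp
  · -- derivative
    set c : ℝ := (-1 : ℝ) ^ (j + 1) * m ^ (α * ((j : ℝ) + 1) - 2) / (Nat.factorial (j + 1) : ℝ) *
      (m ^ 2 - α * ((j : ℝ) + 1) * (1 + m)) * Real.exp (-m) with hc
    have hfun : (fun s => u (j + 1) s m) = fun s : ℝ => s ^ (j + 1) * c := by
      funext x
      rw [huk (j + 1) (by omega) x m, hc]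
      push_cast
      rw [neg_pow]
      ring
    have hder : HasDerivAt (fun s : ℝ => s ^ (j + 1) * c) ((((j : ℝ) + 1) * t ^ j) * c) t := by
      have := (hasDerivAt_pow (j + 1) t).mul_const c
      simpa using this
    rw [hfun]
    convert hder using 1
    -- now the algebraic identity
    rw [hval, hufor j t m hm, hc]
    have hX : m ^ (s - 2) = m ^ s / m ^ 2 := by
      rw [Real.rpow_sub hm, Real.rpow_two]
    have hY : m ^ (α - 2) = m ^ α / m ^ 2 := by
      rw [Real.rpow_sub hm, Real.rpow_two]
    have hZ : α * ((j : ℝ) + 1) - 2 = s + α - 2 := by rw [hs]; ring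
    have hW : m ^ (s + α - 2) = m ^ s * m ^ α / m ^ 2 := by
      rw [Real.rpow_sub hm, Real.rpow_add hm, Real.rpow_two]
    have hE : m ^ (s + 1) = m ^ s * m := Real.rpow_add_one hm.ne' s
    have hF : ((Nat.factorial (j + 1) : ℝ)) = ((j : ℝ) + 1) * (Nat.factorial j : ℝ) := by
      rw [Nat.factorial_succ]; push_cast; ring
    have hneg : ((-t) : ℝ) ^ j = (-1 : ℝ) ^ j * t ^ j := neg_pow t j
    have hone : ((-1 : ℝ)) ^ (j + 1) = -((-1 : ℝ) ^ j) := by rw [pow_succ]; ring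
    rw [hZ, hW, hX, hY, hE, hF, hneg, hone]
    have hm2 : (m : ℝ) ^ 2 ≠ 0 := pow_ne_zero 2 hm.ne'
    have hfj : ((Nat.factorial j : ℝ)) ≠ 0 := Nat.cast_ne_zero.mpr (Nat.factorial_ne_zero j)
    have hj1 : ((j : ℝ) + 1) ≠ 0 := by positivity
    rw [hs]
    field_simp
    ring
end

section
/- Fix a real number α > 1 and let c(t,m) = exp(-m - t*m^α) * (1 + α*t*(m^(α-2) + m^(α-1))) for t ≥ 0 and m > 0. Then for every t ≥ 0 the function m ↦ m * c(t,m) is integrable on (0,∞) and ∫_0^∞ m * c(t,m) dm = 1. -/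
open Real MeasureTheory Filter

/-- Mass conservation for the exact HPM solution of the power-law fragmentation model:
the first moment of `c(t,·)` equals 1 for all times. -/
theorem stmt_6 (α : ℝ) (hα : 1 < α) (c : ℝ → ℝ → ℝ)
    (hc : ∀ t m : ℝ, c t m =
      Real.exp (-m - t * m ^ α) * (1 + α * t * (m ^ (α - 2) + m ^ (α - 1)))) :
    ∀ t : ℝ, 0 ≤ t →
      IntegrableOn (fun m => m * c t m) (Set.Ioi 0) ∧
      (∫ m in Set.Ioi (0:ℝ), m * c t m) = 1 := by
  intro t ht
  set F : ℝ → ℝ := fun m => -(1 + m) * Real.exp (-m - t * m ^ α) with hF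
  have hderiv : ∀ m ∈ Set.Ioi (0:ℝ), HasDerivAt F (m * c t m) m := by
    intro m hm
    have hm0 : (0:ℝ) < m := hm
    have h1 : HasDerivAt (fun x : ℝ => x ^ α) (α * m ^ (α - 1)) m :=
      Real.hasDerivAt_rpow_const (Or.inl hm0.ne')
    have h2 : HasDerivAt (fun x : ℝ => -x - t * x ^ α)
        (-1 - t * (α * m ^ (α - 1))) m := by
      exact (hasDerivAt_id' m).neg.sub (h1.const_mul t)
    have h4 := (((hasDerivAt_id m).const_add (1:ℝ)).neg).mul h2.exp
    have e1 : m * m ^ (α - 2) = m ^ (α - 1) := by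
      have h := Real.rpow_add hm0 1 (α - 2)
      rw [Real.rpow_one, show (1:ℝ) + (α - 2) = α - 1 by ring] at h
      exact h.symm
    have e2 : m * m ^ (α - 1) = m ^ α := by
      have h := Real.rpow_add hm0 1 (α - 1)
      rw [Real.rpow_one, show (1:ℝ) + (α - 1) = α by ring] at h
      exact h.symm
    refine h4.congr_deriv ?_
    symm
    rw [hc]
    simp only [id_eq, Pi.neg_apply]
    linear_combination α * t * Real.exp (-m - t * m ^ α) * e1
  have hnonneg : ∀ m ∈ Set.Ioi (0:ℝ), 0 ≤ m * c t m := by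
    intro m hm
    have hm0 : (0:ℝ) < m := hm
    rw [hc]
    have h1 : 0 ≤ α * t := mul_nonneg (by linarith) ht
    have h2 : 0 ≤ m ^ (α - 2) + m ^ (α - 1) :=
      add_nonneg (Real.rpow_nonneg hm0.le _) (Real.rpow_nonneg hm0.le _)
    positivity
  have hcont : ContinuousWithinAt F (Set.Ici 0) 0 := by
    have h1 : ContinuousAt (fun x : ℝ => x ^ α) 0 :=
      Real.continuousAt_rpow_const 0 α (Or.inr (by linarith))
    exact (((continuousAt_const.add continuousAt_id).neg).mul
      (((continuousAt_id.neg.sub (continuousAt_const.mul h1))).rexp)).continuousWithinAt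
  have htend : Tendsto F atTop (nhds 0) := by
    have hlow : Tendsto (fun m : ℝ => -((1 + m) * Real.exp (-m))) atTop (nhds 0) := by
      have h1 : Tendsto (fun m : ℝ => (1 + m) * Real.exp (-m)) atTop (nhds 0) := by
        have ha : Tendsto (fun m : ℝ => Real.exp (-m)) atTop (nhds 0) :=
          Real.tendsto_exp_neg_atTop_nhds_zero
        have hb : Tendsto (fun m : ℝ => m * Real.exp (-m)) atTop (nhds 0) := by
          simpa using Real.tendsto_pow_mul_exp_neg_atTop_nhds_zero 1
        have := ha.add hb
        simp only [add_zero] at this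
        refine this.congr fun m => by ring
      simpa using h1.neg
    refine tendsto_of_tendsto_of_tendsto_of_le_of_le' hlow tendsto_const_nhds ?_ ?_
    · filter_upwards [eventually_ge_atTop (0:ℝ)] with m hm
      have h1 : 0 ≤ t * m ^ α := mul_nonneg ht (Real.rpow_nonneg hm _)
      have h2 : Real.exp (-m - t * m ^ α) ≤ Real.exp (-m) :=
        Real.exp_le_exp.mpr (by linarith)
      have h3 : (0:ℝ) ≤ 1 + m := by linarith
      simp only [hF, neg_mul, neg_le_neg_iff]
      exact mul_le_mul_of_nonneg_left h2 h3
    · filter_upwards [eventually_ge_atTop (0:ℝ)] with m hm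
      have h3 : (0:ℝ) ≤ 1 + m := by linarith
      simp only [hF, neg_mul, neg_nonpos]
      positivity
  have hF0 : F 0 = -1 := by
    simp [hF, Real.zero_rpow (by linarith : α ≠ 0)]
  refine ⟨integrableOn_Ioi_deriv_of_nonneg hcont hderiv hnonneg htend, ?_⟩
  rw [integral_Ioi_of_hasDerivAt_of_nonneg hcont hderiv hnonneg htend, hF0]
  ring
end

section
/- Let c(t,m) = (2/(t+2))^2 * exp(-2*m/(t+2)) for t ≥ 0 and m > 0. Then c(0,m) = exp(-m), for every t ≥ 0 the function n ↦ c(t,n) is integrable on (0,∞), and c satisfies the Smoluchowski coagulation equation with constant kernel: ∂c/∂t(t,m) = (1/2) * ∫_0^m c(t,m-n) * c(t,n) dn - c(t,m) * ∫_0^∞ c(t,n) dn. -/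
open Real MeasureTheory

lemma int_exp_aux {b : ℝ} (hb : 0 < b) :
    ∫ x in Set.Ioi (0:ℝ), Real.exp (-b * x) = 1 / b := by
  have hderiv : ∀ x ∈ Set.Ioi (0:ℝ),
      HasDerivAt (fun y => -Real.exp (-b * y) / b) (Real.exp (-b * x)) x := by
    intro x _
    have h : HasDerivAt (fun y : ℝ => -b * y) (-b) x := by
      simpa using (hasDerivAt_id x).const_mul (-b)
    have := ((h.exp).neg).div_const b
    convert! this using 1
    field_simp
  have hcont : ContinuousWithinAt (fun y => -Real.exp (-b * y) / b) (Set.Ici (0:ℝ)) 0 :=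
    (Continuous.continuousWithinAt (by fun_prop))
  have hint : IntegrableOn (fun x => Real.exp (-b * x)) (Set.Ioi (0:ℝ)) :=
    exp_neg_integrableOn_Ioi 0 hb
  have htend : Filter.Tendsto (fun y => -Real.exp (-b * y) / b) Filter.atTop (nhds 0) := by
    have : Filter.Tendsto (fun y : ℝ => -b * y) Filter.atTop Filter.atBot := by
      apply Filter.Tendsto.const_mul_atTop_of_neg (by linarith) Filter.tendsto_id
    have h2 := (Real.tendsto_exp_atBot.comp this).neg.div_const b
    simpa using h2
  have := MeasureTheory.integral_Ioi_of_hasDerivAt_of_tendsto hcont hderiv hint htend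
  rw [this]
  simp [neg_div]

/-- The exact solution `c(t,m) = (2/(t+2))^2 exp(-2m/(t+2))` of the Smoluchowski
coagulation equation with constant kernel and exponential initial condition. -/
theorem stmt_7 (c : ℝ → ℝ → ℝ)
    (hc : ∀ t m : ℝ, c t m = (2 / (t + 2)) ^ 2 * Real.exp (-2 * m / (t + 2))) :
    (∀ m : ℝ, 0 < m → c 0 m = Real.exp (-m)) ∧
    (∀ t : ℝ, 0 ≤ t →
      IntegrableOn (fun n => c t n) (Set.Ioi 0) ∧
      ∀ m : ℝ, 0 < m →
        HasDerivAt (fun s => c s m)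
          ((1 / 2) * (∫ n in (0:ℝ)..m, c t (m - n) * c t n) -
            c t m * ∫ n in Set.Ioi (0:ℝ), c t n) t) := by
  constructor
  · intro m hm
    rw [hc]
    norm_num
    ring_nf
  intro t ht
  have h2 : (0:ℝ) < t + 2 := by linarith
  have h2' : (t + 2) ≠ 0 := ne_of_gt h2
  set N : ℝ := 2 / (t + 2) with hNdef
  have hN : 0 < N := by positivity
  have harg : ∀ m : ℝ, -2 * m / (t + 2) = -N * m := by
    intro m; rw [hNdef]; ring
  have hfun : ∀ m : ℝ, c t m = N ^ 2 * Real.exp (-N * m) := by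
    intro m; rw [hc, harg]
  have hint : IntegrableOn (fun n => c t n) (Set.Ioi 0) := by
    have := (exp_neg_integrableOn_Ioi 0 hN).const_mul (N ^ 2)
    apply MeasureTheory.IntegrableOn.congr_fun this _ measurableSet_Ioi
    intro n _; exact (hfun n).symm
  refine ⟨hint, ?_⟩
  intro m hm
  -- compute the convolution integral
  have hconv : (∫ n in (0:ℝ)..m, c t (m - n) * c t n) = N ^ 4 * m * Real.exp (-N * m) := by
    have : ∀ n : ℝ, c t (m - n) * c t n = N ^ 4 * Real.exp (-N * m) := by
      intro n
      rw [hfun, hfun]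
      rw [show N ^ 2 * Real.exp (-N * (m - n)) * (N ^ 2 * Real.exp (-N * n))
          = N ^ 4 * (Real.exp (-N * (m - n)) * Real.exp (-N * n)) by ring,
        ← Real.exp_add]
      ring_nf
    simp only [this]
    rw [intervalIntegral.integral_const, smul_eq_mul]
    ring_nf
  -- compute the total mass integral
  have hioi : (∫ n in Set.Ioi (0:ℝ), c t n) = N := by
    have he : (∫ n in Set.Ioi (0:ℝ), c t n)
        = ∫ n in Set.Ioi (0:ℝ), N ^ 2 * Real.exp (-N * n) := by
      apply setIntegral_congr_fun measurableSet_Ioi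
      intro n _; rw [hfun]
    rw [he, MeasureTheory.integral_const_mul, int_exp_aux hN]
    field_simp
  rw [hconv, hioi, hfun]
  -- now prove the derivative
  have hinv : HasDerivAt (fun s : ℝ => (s + 2)⁻¹) (-(1) / (t + 2) ^ 2) t := by
    simpa using ((hasDerivAt_id t).add_const 2).fun_inv h2'
  have hNs : HasDerivAt (fun s : ℝ => 2 / (s + 2)) (2 * (-(1) / (t + 2) ^ 2)) t := by
    simpa [div_eq_mul_inv] using hinv.const_mul 2
  have hsq : HasDerivAt (fun s : ℝ => (2 / (s + 2)) ^ 2)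
      (2 * (2 / (t + 2)) ^ 1 * (2 * (-(1) / (t + 2) ^ 2))) t := by
    simpa using hNs.fun_pow 2
  have hexparg : HasDerivAt (fun s : ℝ => -2 * m / (s + 2))
      ((-2 * m) * (-(1) / (t + 2) ^ 2)) t := by
    simpa [div_eq_mul_inv] using hinv.const_mul (-2 * m)
  have hexp : HasDerivAt (fun s : ℝ => Real.exp (-2 * m / (s + 2)))
      (Real.exp (-2 * m / (t + 2)) * ((-2 * m) * (-(1) / (t + 2) ^ 2))) t :=
    hexparg.exp
  have hmul := hsq.fun_mul hexp
  have hfuneq : (fun s => c s m) = fun s => (2 / (s + 2)) ^ 2 * Real.exp (-2 * m / (s + 2)) := by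
    funext s; rw [hc]
  rw [hfuneq]
  convert! hmul using 1
  rw [harg, hNdef]
  field_simp
  ring
end

section
/- For every real m ≥ 0 and every t with 0 ≤ t < 2, the series Σ_{k=0}^∞ (t/2)^k * (k+1)! * [ Σ_{r=0}^k (-1)^r * m^(k-r) / (r! * (k-r+1)! * (k-r)!) ] converges and its sum equals (2/(t+2))^2 * exp(m*t/(t+2)). Equivalently, multiplying both sides by exp(-m): the HPM series Σ_{k=0}^∞ u_k(t,m), with u_k(t,m) = exp(-m) * (k+1)! * (t^k/2^k) * Σ_{r=0}^k (-1)^r m^(k-r)/(r!(k-r+1)!(k-r)!), converges to the exact solution (2/(t+2))^2 * exp(-2m/(t+2)). -/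
open Real MeasureTheory

private lemma hpm_pow_eq (a b : ℝ) (j f : ℕ) :
    1 / b ^ (j + 2) * (a ^ j / (f : ℝ)) = 1 / b ^ 2 * ((a / b) ^ j / (f : ℝ)) := by
  rw [div_pow, pow_add]
  ring

set_option maxHeartbeats 1600000 in
private lemma hpm_key (m x : ℝ) (hm : 0 ≤ m) (hx0 : 0 ≤ x) (hx1 : x < 1) :
    HasSum (fun k : ℕ => x ^ k * (Nat.factorial (k + 1) : ℝ) *
        ∑ r ∈ Finset.range (k + 1), (-1 : ℝ) ^ r * m ^ (k - r) /
          ((Nat.factorial r : ℝ) * (Nat.factorial (k - r + 1) : ℝ) *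
            (Nat.factorial (k - r) : ℝ)))
      (1 / (1 + x) ^ 2 * Real.exp (m * x / (1 + x))) := by
  have h1x : (0:ℝ) < 1 + x := by linarith
  set F : ℕ × ℕ → ℝ := fun p =>
    ((p.2 + (p.1 + 1)).choose (p.1 + 1) : ℝ) * (-x) ^ p.2 *
      ((m * x) ^ p.1 / (Nat.factorial p.1)) with hF
  have hnx : ‖(-x : ℝ)‖ < 1 := by
    rw [norm_neg, Real.norm_eq_abs, abs_of_nonneg hx0]; exact hx1
  have hxn : ‖(x : ℝ)‖ < 1 := by
    rw [Real.norm_eq_abs, abs_of_nonneg hx0]; exact hx1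
  -- fiberwise sums
  have hfib : ∀ j : ℕ, HasSum (fun r => F (j, r))
      (1 / (1 + x) ^ (j + 2) * ((m * x) ^ j / (Nat.factorial j))) := by
    intro j
    have h := (hasSum_choose_mul_geometric_of_norm_lt_one (j + 1) hnx).mul_right
      ((m * x) ^ j / (Nat.factorial j))
    rw [sub_neg_eq_add] at h
    exact h
  -- the exponential series
  have hE : HasSum (fun j : ℕ => (m * x / (1 + x)) ^ j / (Nat.factorial j))
      (Real.exp (m * x / (1 + x))) := by
    rw [Real.exp_eq_exp_ℝ]
    exact NormedSpace.expSeries_div_hasSum_exp _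
  have hc : HasSum (fun j : ℕ => 1 / (1 + x) ^ (j + 2) * ((m * x) ^ j / (Nat.factorial j)))
      (1 / (1 + x) ^ 2 * Real.exp (m * x / (1 + x))) := by
    have hfun : (fun j : ℕ => 1 / (1 + x) ^ (j + 2) * ((m * x) ^ j / (Nat.factorial j)))
        = fun j : ℕ => 1 / (1 + x) ^ 2 * ((m * x / (1 + x)) ^ j / (Nat.factorial j)) := by
      funext j
      exact hpm_pow_eq _ _ _ _
    rw [hfun]
    exact hE.mul_left _
  -- summability of F
  have hFsum : Summable F := by
    apply Summable.of_norm
    have hG : (fun p => ‖F p‖) = fun p : ℕ × ℕ =>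
        ((p.2 + (p.1 + 1)).choose (p.1 + 1) : ℝ) * x ^ p.2 *
          ((m * x) ^ p.1 / (Nat.factorial p.1)) := by
      funext p
      have hmx : (0:ℝ) ≤ m * x := mul_nonneg hm hx0
      simp [hF, abs_mul, abs_pow, abs_of_nonneg hx0, abs_of_nonneg hmx, abs_div,
        Nat.abs_cast, abs_of_nonneg hm]
    rw [hG]
    refine (summable_prod_of_nonneg ?_).mpr ⟨?_, ?_⟩
    · intro p
      have hmx : (0:ℝ) ≤ m * x := mul_nonneg hm hx0
      positivity
    · intro j
      simpa using (summable_choose_mul_geometric_of_norm_lt_one (j + 1) hxn).mul_right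
        ((m * x) ^ j / (Nat.factorial j))
    · have hfib' : ∀ j : ℕ, HasSum
          (fun r => ((r + (j + 1)).choose (j + 1) : ℝ) * x ^ r *
            ((m * x) ^ j / (Nat.factorial j)))
          (1 / (1 - x) ^ (j + 2) * ((m * x) ^ j / (Nat.factorial j))) := by
        intro j
        exact (hasSum_choose_mul_geometric_of_norm_lt_one (j + 1) hxn).mul_right _
      have hE' : HasSum (fun j : ℕ => (m * x / (1 - x)) ^ j / (Nat.factorial j))
          (Real.exp (m * x / (1 - x))) := by
        rw [Real.exp_eq_exp_ℝ]
        exact NormedSpace.expSeries_div_hasSum_exp _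
      have hc' : Summable
          (fun j : ℕ => 1 / (1 - x) ^ (j + 2) * ((m * x) ^ j / (Nat.factorial j))) := by
        have hfun : (fun j : ℕ => 1 / (1 - x) ^ (j + 2) * ((m * x) ^ j / (Nat.factorial j)))
            = fun j : ℕ => 1 / (1 - x) ^ 2 * ((m * x / (1 - x)) ^ j / (Nat.factorial j)) := by
          funext j
          exact hpm_pow_eq _ _ _ _
        rw [hfun]
        exact (hE'.mul_left _).summable
      exact hc'.congr fun j => ((hfib' j).tsum_eq).symm
  -- F has the claimed sum
  have hFS : HasSum F (1 / (1 + x) ^ 2 * Real.exp (m * x / (1 + x))) := by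
    have h1 := hFsum.hasSum
    have h2 := h1.prod_fiberwise hfib
    rwa [← hc.unique h2] at h1
  -- reindex over antidiagonals
  have hanti : HasSum (fun k : ℕ => ∑ p ∈ Finset.HasAntidiagonal.antidiagonal k, F p)
      (1 / (1 + x) ^ 2 * Real.exp (m * x / (1 + x))) := by
    have h1 : HasSum (F ∘ Finset.HasAntidiagonal.sigmaAntidiagonalEquivProd)
        (1 / (1 + x) ^ 2 * Real.exp (m * x / (1 + x))) :=
      (Equiv.hasSum_iff _).mpr hFS
    refine h1.sigma fun n => ?_
    have h3 := hasSum_fintype (fun c : (Finset.HasAntidiagonal.antidiagonal n : Finset (ℕ × ℕ)) => F c)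
    rwa [Finset.sum_coe_sort] at h3
  -- identify the terms
  have hfun : (fun k : ℕ => x ^ k * (Nat.factorial (k + 1) : ℝ) *
      ∑ r ∈ Finset.range (k + 1), (-1 : ℝ) ^ r * m ^ (k - r) /
        ((Nat.factorial r : ℝ) * (Nat.factorial (k - r + 1) : ℝ) *
          (Nat.factorial (k - r) : ℝ)))
      = fun k : ℕ => ∑ p ∈ Finset.HasAntidiagonal.antidiagonal k, F p := by
    funext k
    rw [Finset.Nat.sum_antidiagonal_eq_sum_range_succ_mk, Finset.mul_sum,
      ← Finset.sum_range_reflect]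
    refine Finset.sum_congr rfl fun i hi => ?_
    rw [Finset.mem_range] at hi
    have hik : i ≤ k := Nat.lt_succ_iff.mp hi
    have h1 : k + 1 - 1 - i = k - i := by omega
    rw [h1]
    have h2 : k - (k - i) = i := by omega
    rw [h2]
    simp only [hF]
    have h3 : (k - i) + (i + 1) = k + 1 := by omega
    rw [h3]
    have hch : ((k + 1).choose (i + 1) : ℝ) =
        (Nat.factorial (k + 1) : ℝ) /
          ((Nat.factorial (i + 1) : ℝ) * (Nat.factorial (k - i) : ℝ)) := by
      rw [Nat.cast_choose ℝ (by omega : i + 1 ≤ k + 1),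
        show k + 1 - (i + 1) = k - i from by omega]
    rw [hch]
    have hxk : x ^ k = x ^ (k - i) * x ^ i := by
      rw [← pow_add]; congr 1; omega
    have hfi : (Nat.factorial i : ℝ) ≠ 0 := Nat.cast_ne_zero.mpr (Nat.factorial_ne_zero _)
    have hfi1 : (Nat.factorial (i + 1) : ℝ) ≠ 0 := Nat.cast_ne_zero.mpr (Nat.factorial_ne_zero _)
    have hfki : (Nat.factorial (k - i) : ℝ) ≠ 0 := Nat.cast_ne_zero.mpr (Nat.factorial_ne_zero _)
    rw [neg_pow x (k - i), mul_pow m x i, hxk]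
    field_simp
  rw [hfun]
  exact hanti

/-- The HPM series for the constant-kernel Smoluchowski equation with exponential initial
condition converges for `0 ≤ t < 2` and sums to the exact solution. -/
theorem stmt_8 (m t : ℝ) (hm : 0 ≤ m) (ht0 : 0 ≤ t) (ht2 : t < 2) :
    HasSum (fun k : ℕ => (t / 2) ^ k * (Nat.factorial (k + 1) : ℝ) *
        ∑ r ∈ Finset.range (k + 1), (-1 : ℝ) ^ r * m ^ (k - r) /
          ((Nat.factorial r : ℝ) * (Nat.factorial (k - r + 1) : ℝ) *
            (Nat.factorial (k - r) : ℝ)))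
      ((2 / (t + 2)) ^ 2 * Real.exp (m * t / (t + 2))) ∧
    HasSum (fun k : ℕ => Real.exp (-m) * (Nat.factorial (k + 1) : ℝ) * (t ^ k / 2 ^ k) *
        ∑ r ∈ Finset.range (k + 1), (-1 : ℝ) ^ r * m ^ (k - r) /
          ((Nat.factorial r : ℝ) * (Nat.factorial (k - r + 1) : ℝ) *
            (Nat.factorial (k - r) : ℝ)))
      ((2 / (t + 2)) ^ 2 * Real.exp (-2 * m / (t + 2))) := by
  have ht2' : t + 2 ≠ 0 := by linarith
  have hkey := hpm_key m (t / 2) hm (by linarith) (by linarith)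
  have heq1 : 1 / (1 + t / 2) ^ 2 = (2 / (t + 2)) ^ 2 := by
    rw [show (1 : ℝ) + t / 2 = (t + 2) / 2 from by ring, div_pow, one_div_div, ← div_pow]
  have heq2 : m * (t / 2) / (1 + t / 2) = m * t / (t + 2) := by
    rw [div_eq_div_iff (by linarith) ht2']
    ring
  rw [heq1, heq2] at hkey
  refine ⟨hkey, ?_⟩
  have h2 := hkey.mul_left (Real.exp (-m))
  have hfun : (fun k : ℕ => Real.exp (-m) * (Nat.factorial (k + 1) : ℝ) * (t ^ k / 2 ^ k) *
      ∑ r ∈ Finset.range (k + 1), (-1 : ℝ) ^ r * m ^ (k - r) /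
        ((Nat.factorial r : ℝ) * (Nat.factorial (k - r + 1) : ℝ) *
          (Nat.factorial (k - r) : ℝ)))
      = fun k : ℕ => Real.exp (-m) * ((t / 2) ^ k * (Nat.factorial (k + 1) : ℝ) *
      ∑ r ∈ Finset.range (k + 1), (-1 : ℝ) ^ r * m ^ (k - r) /
        ((Nat.factorial r : ℝ) * (Nat.factorial (k - r + 1) : ℝ) *
          (Nat.factorial (k - r) : ℝ))) := by
    funext k
    rw [div_pow]
    ring
  rw [hfun]
  have hval : Real.exp (-m) * ((2 / (t + 2)) ^ 2 * Real.exp (m * t / (t + 2)))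
      = (2 / (t + 2)) ^ 2 * Real.exp (-2 * m / (t + 2)) := by
    rw [mul_left_comm, ← Real.exp_add]
    congr 2
    field_simp
    ring
  rw [← hval]
  exact h2
end

section
/- Define u_0(t,m) = exp(-m) and, for k ≥ 1, u_k(t,m) = exp(-m) * (k+1)! * (t^k/2^k) * Σ_{r=0}^k (-1)^r * m^(k-r) / (r! * (k-r+1)! * (k-r)!). Then for every k ≥ 1, t ≥ 0 and m > 0: u_k(0,m) = 0 and ∂u_k/∂t(t,m) = (1/2) * ∫_0^m [ Σ_{i+j=k-1} u_i(t,m-n) * u_j(t,n) ] dn - ∫_0^∞ [ Σ_{i+j=k-1} u_i(t,m) * u_j(t,n) ] dn, where the inner sums range over pairs of nonnegative integers i, j with i + j = k - 1. -/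
open Real MeasureTheory Finset intervalIntegral


lemma expPowInt (d : ℕ) : IntegrableOn (fun n : ℝ => Real.exp (-n) * n ^ d) (Set.Ioi 0) := by
  have h := Real.GammaIntegral_convergent (s := d + 1) (by positivity)
  refine h.congr_fun (fun x hx => ?_) measurableSet_Ioi
  rw [add_sub_cancel_right]
  simp only [Real.rpow_natCast]

lemma expPowVal (d : ℕ) : ∫ n in Set.Ioi (0:ℝ), Real.exp (-n) * n ^ d = d.factorial := by
  have h := Real.Gamma_eq_integral (s := (d:ℝ) + 1) (by positivity)
  rw [Real.Gamma_nat_eq_factorial] at h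
  rw [h]
  refine setIntegral_congr_fun measurableSet_Ioi (fun x hx => ?_)
  rw [add_sub_cancel_right, Real.rpow_natCast]

lemma chooseFact {a i : ℕ} (h : a ≤ i) :
    (((i+1).choose a : ℕ) : ℝ)
      = ((i+1).factorial : ℝ) / ((a.factorial : ℝ) * ((i-a+1).factorial : ℝ)) := by
  rw [Nat.cast_choose ℝ (le_trans h (Nat.le_succ i)), show i+1-a = i-a+1 by omega]

-- alternating binomial partial sum
lemma altChoose (j : ℕ) :
    ∑ r ∈ range (j+1), (-1:ℝ)^r * (((j+1).choose r : ℕ) : ℝ) = (-1)^j := by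
  have h0 : ∑ r ∈ range (j+2), (-1:ℝ)^r * (((j+1).choose r : ℕ) : ℝ) = 0 := by
    have := Int.alternating_sum_range_choose_of_ne (n := j+1) (by omega)
    have := congrArg (fun z : ℤ => (z : ℝ)) this
    push_cast at this
    simpa using this
  have h1 := Finset.sum_range_succ (fun r => (-1:ℝ)^r * (((j+1).choose r : ℕ) : ℝ)) (j+1)
  rw [h1, Nat.choose_self] at h0
  push_cast at h0
  have : (-1:ℝ)^(j+1) = -(-1)^j := by ring
  rw [this] at h0
  linarith


lemma betaNat (m : ℝ) : ∀ a b : ℕ, ∫ n in (0:ℝ)..m, (m - n) ^ a * n ^ b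
    = m ^ (a + b + 1) * a.factorial * b.factorial / (a + b + 1).factorial := by
  intro a
  induction a with
  | zero =>
    intro b
    simp only [pow_zero, one_mul, integral_pow]
    have hb : ((b:ℝ) + 1) ≠ 0 := by positivity
    have hbf : ((b).factorial : ℝ) ≠ 0 := by positivity
    rw [show 0 + b + 1 = b + 1 by omega, Nat.factorial_succ]
    push_cast
    rw [zero_pow (by omega)]
    field_simp
    ring
  | succ a ih =>
    intro b
    have hb : ((b:ℝ) + 1) ≠ 0 := by positivity
    have hpar := intervalIntegral.integral_mul_deriv_eq_deriv_mul
      (u := fun n : ℝ => (m - n) ^ (a + 1)) (u' := fun n : ℝ => -((a + 1 : ℝ) * (m - n) ^ a))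
      (v := fun n : ℝ => n ^ (b + 1) / (b + 1)) (v' := fun n : ℝ => n ^ b)
      (a := (0:ℝ)) (b := m)
      (fun x _ => by
        have h1 : HasDerivAt (fun n : ℝ => m - n) (-1) x := (hasDerivAt_id x).const_sub m
        have h2 := (hasDerivAt_pow (a + 1) (m - x)).comp x h1
        simpa [Function.comp_def, mul_comm, mul_assoc, mul_left_comm] using h2)
      (fun x _ => by
        have h2 := (hasDerivAt_pow (b + 1) x).div_const ((b:ℝ) + 1)
        norm_num at h2
        convert h2 using 1
        field_simp)
      ((Continuous.intervalIntegrable (by continuity) _ _))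
      ((Continuous.intervalIntegrable (by continuity) _ _))
    rw [hpar, sub_self, zero_pow (Nat.succ_ne_zero a), zero_pow (Nat.succ_ne_zero b)]
    have : ∫ x in (0:ℝ)..m, -((a+1:ℝ) * (m - x) ^ a) * (x ^ (b+1) / (b+1))
        = (-((a+1:ℝ)/(b+1))) * ∫ x in (0:ℝ)..m, (m - x) ^ a * x ^ (b+1) := by
      rw [← intervalIntegral.integral_const_mul]
      congr 1; funext x; ring
    rw [this, ih (b + 1), show a + (b+1) + 1 = a + b + 2 by omega,
      show a + 1 + b + 1 = a + b + 2 by omega, Nat.factorial_succ b, Nat.factorial_succ a]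
    have h2 : ((a + b + 2).factorial : ℝ) ≠ 0 := by positivity
    push_cast
    field_simp
    ring


lemma chooseSuccSum (n : ℕ) (h : ℕ → ℝ) :
    ∑ b ∈ range (n+2), ((n+1).choose b : ℝ) * h b
      = ∑ b ∈ range (n+1), (n.choose b : ℝ) * h b
        + ∑ b ∈ range (n+1), (n.choose b : ℝ) * h (b+1) := by
  rw [Finset.sum_range_succ' (fun b => ((n+1).choose b : ℝ) * h b)]
  have e1 : ∀ b, (((n+1).choose (b+1) : ℕ) : ℝ) * h (b+1)
      = (n.choose b : ℝ) * h (b+1) + (n.choose (b+1) : ℝ) * h (b+1) := by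
    intro b
    rw [Nat.choose_succ_succ]
    push_cast
    ring
  rw [Finset.sum_congr rfl (fun b _ => e1 b), Finset.sum_add_distrib]
  have e2 : ∑ b ∈ range (n+1), (n.choose (b+1) : ℝ) * h (b+1) + (n.choose 0 : ℝ) * h 0
      = ∑ b ∈ range (n+1), (n.choose b : ℝ) * h b := by
    rw [← Finset.sum_range_succ' (fun b => (n.choose b : ℝ) * h b) (n+1),
      Finset.sum_range_succ]
    simp [Nat.choose_succ_self]
  simp only [Nat.choose_zero_right, Nat.cast_one, one_mul, Nat.choose_succ_succ] at *
  rw [← e2]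
  ring

lemma vandSum (M : ℕ) : ∀ (N : ℕ) (g : ℕ → ℝ),
    ∑ a ∈ range (M+1), ∑ b ∈ range (N+1), (M.choose a : ℝ) * (N.choose b : ℝ) * g (a+b)
      = ∑ r ∈ range (M+N+1), ((M+N).choose r : ℝ) * g r := by
  intro N
  induction N with
  | zero => intro g; simp
  | succ N ih =>
    intro g
    have step : ∀ a, ∑ b ∈ range (N+2), (M.choose a : ℝ) * ((N+1).choose b : ℝ) * g (a+b)
        = ∑ b ∈ range (N+1), (M.choose a : ℝ) * (N.choose b : ℝ) * g (a+b)
          + ∑ b ∈ range (N+1), (M.choose a : ℝ) * (N.choose b : ℝ) * g ((a+b)+1) := by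
      intro a
      have := chooseSuccSum N (fun b => (M.choose a : ℝ) * g (a+b))
      calc ∑ b ∈ range (N+2), (M.choose a : ℝ) * ((N+1).choose b : ℝ) * g (a+b)
          = ∑ b ∈ range (N+2), ((N+1).choose b : ℝ) * ((M.choose a : ℝ) * g (a+b)) := by
            apply Finset.sum_congr rfl; intros; ring
        _ = _ := by
            rw [this]
            congr 1
            · apply Finset.sum_congr rfl; intros; ring
            · apply Finset.sum_congr rfl; intro b _
              have : a + (b+1) = (a+b)+1 := rfl
              rw [this]; ring
    rw [Finset.sum_congr rfl (fun a _ => step a), Finset.sum_add_distrib, ih g,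
      ih (fun r => g (r+1))]
    have := chooseSuccSum (M+N) g
    rw [show M + (N+1) + 1 = M + N + 2 by omega, show M + (N+1) = M + N + 1 by omega, this]

lemma swapSum (K : ℕ) (f : ℕ → ℕ → ℝ) :
    ∑ p ∈ Finset.HasAntidiagonal.antidiagonal K, f p.1 p.2 = ∑ p ∈ Finset.HasAntidiagonal.antidiagonal K, f p.2 p.1 := by
  conv_lhs => rw [← Finset.HasAntidiagonal.map_swap_antidiagonal]
  rw [Finset.sum_map]
  rfl

lemma combMain (K : ℕ) (g : ℕ → ℝ) :
    ∑ p ∈ Finset.HasAntidiagonal.antidiagonal K,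
      ((∑ a ∈ range (p.1+1), ∑ b ∈ range (p.2+1),
          (((p.1+1).choose a : ℕ) : ℝ) * (((p.2+1).choose b : ℕ) : ℝ) * g (a+b))
        + 2 * ∑ a ∈ range (p.1+1), (((p.1+1).choose a : ℕ) : ℝ) * g (a+p.2+1))
    = (K+1) * ∑ r ∈ range (K+2), (((K+2).choose r : ℕ) : ℝ) * g r := by
  -- notation
  set F : ℝ := ∑ r ∈ range (K+3), (((K+2).choose r : ℕ) : ℝ) * g r with hF
  have decomp : ∀ p ∈ Finset.HasAntidiagonal.antidiagonal K,
      (∑ a ∈ range (p.1+1), ∑ b ∈ range (p.2+1),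
          (((p.1+1).choose a : ℕ) : ℝ) * (((p.2+1).choose b : ℕ) : ℝ) * g (a+b))
        + 2 * ∑ a ∈ range (p.1+1), (((p.1+1).choose a : ℕ) : ℝ) * g (a+p.2+1)
      = (F - g (K+2))
        + ((∑ a ∈ range (p.1+1), (((p.1+1).choose a : ℕ) : ℝ) * g (a+p.2+1))
          - (∑ b ∈ range (p.2+1), (((p.2+1).choose b : ℕ) : ℝ) * g (b+p.1+1))) := by
    intro p hp
    obtain ⟨i, j⟩ := p
    simp only [Finset.HasAntidiagonal.mem_antidiagonal] at hp
    simp only []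
    have hv := vandSum (i+1) (j+1) g
    rw [show i+1+(j+1)+1 = K+3 by omega, show i+1+(j+1) = K+2 by omega, ← hF] at hv
    rw [← hv]
    -- peel the last row and column
    rw [Finset.sum_range_succ (fun a => ∑ b ∈ range (j+1+1),
      (((i+1).choose a : ℕ) : ℝ) * (((j+1).choose b : ℕ) : ℝ) * g (a+b))]
    have rowsplit : ∀ a, (∑ b ∈ range (j+1+1),
        (((i+1).choose a : ℕ) : ℝ) * (((j+1).choose b : ℕ) : ℝ) * g (a+b))
        = (∑ b ∈ range (j+1),
        (((i+1).choose a : ℕ) : ℝ) * (((j+1).choose b : ℕ) : ℝ) * g (a+b))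
          + (((i+1).choose a : ℕ) : ℝ) * g (a+j+1) := by
      intro a
      rw [Finset.sum_range_succ]
      congr 1
      simp only [Nat.choose_self, Nat.cast_one, mul_one, one_mul]
      rfl
    rw [Finset.sum_congr rfl (fun a _ => rowsplit a), Finset.sum_add_distrib]
    have lastrow : (∑ b ∈ range (j+1+1),
        (((i+1).choose (i+1) : ℕ) : ℝ) * (((j+1).choose b : ℕ) : ℝ) * g ((i+1)+b))
        = (∑ b ∈ range (j+1), (((j+1).choose b : ℕ) : ℝ) * g (b+i+1)) + g (K+2) := by
      rw [Finset.sum_range_succ]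
      simp only [Nat.choose_self, Nat.cast_one, one_mul]
      rw [show i+1+(j+1) = K+2 by omega]
      congr 1
      apply Finset.sum_congr rfl
      intro b _
      rw [show (i+1)+b = b+i+1 by omega]
    rw [lastrow]
    ring
  rw [Finset.sum_congr rfl decomp, Finset.sum_add_distrib, Finset.sum_sub_distrib,
    Finset.sum_sub_distrib]
  have hswap : ∑ p ∈ Finset.HasAntidiagonal.antidiagonal K,
        (∑ a ∈ range (p.1+1), (((p.1+1).choose a : ℕ) : ℝ) * g (a+p.2+1))
      = ∑ p ∈ Finset.HasAntidiagonal.antidiagonal K,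
        (∑ b ∈ range (p.2+1), (((p.2+1).choose b : ℕ) : ℝ) * g (b+p.1+1)) :=
    swapSum K (fun x y => ∑ a ∈ range (x+1), (((x+1).choose a : ℕ) : ℝ) * g (a+y+1))
  rw [hswap, sub_self, add_zero, Finset.sum_const, Finset.sum_const,
    Finset.Nat.card_antidiagonal]
  have hlast : F = (∑ r ∈ range (K+2), (((K+2).choose r : ℕ) : ℝ) * g r) + g (K+2) := by
    rw [hF, Finset.sum_range_succ]
    simp [Nat.choose_self]
  rw [hlast]
  simp only [nsmul_eq_mul, smul_eq_mul]
  push_cast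
  ring


lemma intSum2 (m : ℝ) (M N : ℕ) (c : ℕ → ℕ → ℝ) (d e : ℕ → ℕ → ℕ) :
    ∫ n in (0:ℝ)..m, ∑ a ∈ Finset.range M, ∑ b ∈ Finset.range N,
        c a b * ((m - n) ^ (d a b) * n ^ (e a b))
      = ∑ a ∈ Finset.range M, ∑ b ∈ Finset.range N, c a b *
          (m ^ (d a b + e a b + 1) * ((d a b).factorial : ℝ) * ((e a b).factorial : ℝ)
            / ((d a b + e a b + 1).factorial : ℝ)) := by
  rw [intervalIntegral.integral_finset_sum (fun a _ => Continuous.intervalIntegrable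
    (by fun_prop) _ _)]
  refine Finset.sum_congr rfl (fun a _ => ?_)
  rw [intervalIntegral.integral_finset_sum (fun b _ => Continuous.intervalIntegrable
    (by fun_prop) _ _)]
  refine Finset.sum_congr rfl (fun b _ => ?_)
  rw [intervalIntegral.integral_const_mul, betaNat]


/-- The closed-form HPM coefficients for the constant-kernel Smoluchowski equation with
exponential initial condition satisfy the HPM recursion. -/
theorem stmt_9 (u : ℕ → ℝ → ℝ → ℝ)
    (hu0 : ∀ t m : ℝ, u 0 t m = Real.exp (-m))
    (huk : ∀ k : ℕ, 1 ≤ k → ∀ t m : ℝ,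
      u k t m = Real.exp (-m) * (Nat.factorial (k + 1) : ℝ) * (t ^ k / 2 ^ k) *
        ∑ r ∈ Finset.range (k + 1), (-1 : ℝ) ^ r * m ^ (k - r) /
          ((Nat.factorial r : ℝ) * (Nat.factorial (k - r + 1) : ℝ) *
            (Nat.factorial (k - r) : ℝ))) :
    ∀ k : ℕ, 1 ≤ k → ∀ t : ℝ, 0 ≤ t → ∀ m : ℝ, 0 < m →
      u k 0 m = 0 ∧
      HasDerivAt (fun s => u k s m)
        ((1 / 2) * (∫ n in (0:ℝ)..m,
            ∑ p ∈ Finset.HasAntidiagonal.antidiagonal (k - 1), u p.1 t (m - n) * u p.2 t n) -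
          ∫ n in Set.Ioi (0:ℝ),
            ∑ p ∈ Finset.HasAntidiagonal.antidiagonal (k - 1), u p.1 t m * u p.2 t n) t := by
  -- uniform closed form
  have hu : ∀ (j : ℕ) (t x : ℝ),
      u j t x = Real.exp (-x) * ((j+1).factorial : ℝ) * (t ^ j / 2 ^ j) *
        ∑ r ∈ range (j + 1), (-1 : ℝ) ^ r * x ^ (j - r) /
          ((r.factorial : ℝ) * ((j - r + 1).factorial : ℝ) * ((j - r).factorial : ℝ)) := by
    intro j t x
    match j with
    | 0 => simp [hu0, Nat.factorial]
    | (j+1) => exact huk (j+1) (by omega) t x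
  intro k hk t ht m hm
  obtain ⟨K, rfl⟩ : ∃ K, k = K + 1 := ⟨k - 1, by omega⟩
  simp only [Nat.add_sub_cancel]
  constructor
  · rw [huk (K+1) (by omega) 0 m]
    simp
  set g : ℕ → ℝ := fun r => (-1:ℝ)^r * m ^ (K+1-r) / ((K+1-r).factorial : ℝ) with hg
  -- the Ioi integrals
  have hrew : ∀ j : ℕ, ∀ n : ℝ, u j t n
      = ∑ r ∈ range (j+1), (((j+1).factorial : ℝ) * (t^j/2^j) *
          ((-1:ℝ)^r / ((r.factorial : ℝ) * ((j-r+1).factorial : ℝ) * ((j-r).factorial : ℝ))))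
        * (Real.exp (-n) * n ^ (j-r)) := by
    intro j n
    rw [hu j t n, Finset.mul_sum]
    refine Finset.sum_congr rfl (fun r _ => ?_)
    ring
  have hUint : ∀ j : ℕ, IntegrableOn (fun n => u j t n) (Set.Ioi (0:ℝ)) := by
    intro j
    have : IntegrableOn (fun n : ℝ => ∑ r ∈ range (j+1),
        (((j+1).factorial : ℝ) * (t^j/2^j) *
          ((-1:ℝ)^r / ((r.factorial : ℝ) * ((j-r+1).factorial : ℝ) * ((j-r).factorial : ℝ))))
        * (Real.exp (-n) * n ^ (j-r))) (Set.Ioi (0:ℝ)) :=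
      MeasureTheory.integrable_finset_sum _ (fun r _ => ((expPowInt (j-r)).const_mul _))
    exact this.congr_fun (fun n _ => (hrew j n).symm) measurableSet_Ioi
  have hIoi : ∀ j : ℕ, ∫ n in Set.Ioi (0:ℝ), u j t n = (-1)^j * t^j / 2^j := by
    intro j
    calc ∫ n in Set.Ioi (0:ℝ), u j t n
        = ∫ n in Set.Ioi (0:ℝ), ∑ r ∈ range (j+1),
            (((j+1).factorial : ℝ) * (t^j/2^j) *
              ((-1:ℝ)^r / ((r.factorial : ℝ) * ((j-r+1).factorial : ℝ) * ((j-r).factorial : ℝ))))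
            * (Real.exp (-n) * n ^ (j-r)) := by
          exact setIntegral_congr_fun measurableSet_Ioi (fun n _ => hrew j n)
      _ = ∑ r ∈ range (j+1), (((j+1).factorial : ℝ) * (t^j/2^j) *
              ((-1:ℝ)^r / ((r.factorial : ℝ) * ((j-r+1).factorial : ℝ) * ((j-r).factorial : ℝ))))
            * ((j-r).factorial : ℝ) := by
          rw [MeasureTheory.integral_finset_sum _
            (fun r _ => ((expPowInt (j-r)).const_mul _))]
          refine Finset.sum_congr rfl (fun r _ => ?_)
          rw [MeasureTheory.integral_const_mul, expPowVal]
      _ = (t^j/2^j) * ∑ r ∈ range (j+1), (-1:ℝ)^r * (((j+1).choose r : ℕ) : ℝ) := by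
          rw [Finset.mul_sum]
          refine Finset.sum_congr rfl (fun r hr => ?_)
          have hr' : r ≤ j := by simp at hr; omega
          rw [chooseFact hr']
          have h1 : ((r.factorial : ℕ) : ℝ) ≠ 0 := by positivity
          have h2 : (((j-r+1).factorial : ℕ) : ℝ) ≠ 0 := by positivity
          have h3 : (((j-r).factorial : ℕ) : ℝ) ≠ 0 := by positivity
          field_simp
      _ = (-1)^j * t^j / 2^j := by rw [altChoose]; ring
  
  -- continuity of the closed form
  have hcf : ∀ j : ℕ, Continuous (fun x : ℝ => Real.exp (-x) * ((j+1).factorial : ℝ) *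
      (t ^ j / 2 ^ j) * ∑ r ∈ range (j + 1), (-1 : ℝ) ^ r * x ^ (j - r) /
        ((r.factorial : ℝ) * ((j - r + 1).factorial : ℝ) * ((j - r).factorial : ℝ))) := by
    intro j
    refine Continuous.mul (Continuous.mul (Continuous.mul ?_ continuous_const)
      continuous_const) ?_
    · exact Real.continuous_exp.comp continuous_neg
    · exact continuous_finset_sum _
        (fun r _ => ((continuous_const.mul (continuous_pow (j-r))).div_const _))
  have hfun2 : ∀ p : ℕ × ℕ, (fun n : ℝ => u p.1 t (m - n) * u p.2 t n)
      = fun n : ℝ => (Real.exp (-(m-n)) * ((p.1+1).factorial : ℝ) *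
      (t ^ p.1 / 2 ^ p.1) * ∑ r ∈ range (p.1 + 1), (-1 : ℝ) ^ r * (m-n) ^ (p.1 - r) /
        ((r.factorial : ℝ) * ((p.1 - r + 1).factorial : ℝ) * ((p.1 - r).factorial : ℝ)))
      * (Real.exp (-n) * ((p.2+1).factorial : ℝ) *
      (t ^ p.2 / 2 ^ p.2) * ∑ r ∈ range (p.2 + 1), (-1 : ℝ) ^ r * n ^ (p.2 - r) /
        ((r.factorial : ℝ) * ((p.2 - r + 1).factorial : ℝ) * ((p.2 - r).factorial : ℝ))) := by
    intro p
    funext n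
    rw [hu p.1 t (m-n), hu p.2 t n]
  -- the interval integral, per pair
  have hI1 : ∀ p ∈ Finset.HasAntidiagonal.antidiagonal K, (∫ n in (0:ℝ)..m, u p.1 t (m-n) * u p.2 t n)
      = Real.exp (-m) * t^K / 2^K * (∑ a ∈ range (p.1+1), ∑ b ∈ range (p.2+1),
          (((p.1+1).choose a : ℕ) : ℝ) * (((p.2+1).choose b : ℕ) : ℝ) * g (a+b)) := by
    intro p hp
    obtain ⟨i, j⟩ := p
    simp only [Finset.HasAntidiagonal.mem_antidiagonal] at hp
    simp only []
    have hprod : ∀ n : ℝ, u i t (m-n) * u j t n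
        = ∑ a ∈ range (i+1), ∑ b ∈ range (j+1),
          (Real.exp (-m) * (((i+1).factorial : ℝ) * ((j+1).factorial : ℝ)) * (t^K/2^K) *
            ((-1:ℝ)^a * (-1:ℝ)^b /
              ((a.factorial : ℝ) * ((i-a+1).factorial : ℝ) * ((i-a).factorial : ℝ) *
               ((b.factorial : ℝ) * ((j-b+1).factorial : ℝ) * ((j-b).factorial : ℝ)))))
            * ((m-n)^(i-a) * n^(j-b)) := by
      intro n
      rw [hu i t (m-n), hu j t n]
      have hexp : Real.exp (-(m-n)) * Real.exp (-n) = Real.exp (-m) := by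
        rw [← Real.exp_add]
        congr 1
        ring
      have htK : (t^i/2^i) * (t^j/2^j) = t^K/2^K := by
        rw [div_mul_div_comm, ← pow_add, ← pow_add, hp]
      calc (Real.exp (-(m-n)) * ((i+1).factorial : ℝ) * (t^i/2^i) *
            ∑ r ∈ range (i+1), (-1:ℝ)^r * (m-n)^(i-r) /
              ((r.factorial:ℝ) * ((i-r+1).factorial:ℝ) * ((i-r).factorial:ℝ)))
          * (Real.exp (-n) * ((j+1).factorial : ℝ) * (t^j/2^j) *
            ∑ r ∈ range (j+1), (-1:ℝ)^r * n^(j-r) /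
              ((r.factorial:ℝ) * ((j-r+1).factorial:ℝ) * ((j-r).factorial:ℝ)))
          = (Real.exp (-(m-n)) * Real.exp (-n)) *
            (((i+1).factorial : ℝ) * ((j+1).factorial : ℝ)) * ((t^i/2^i) * (t^j/2^j)) *
            ((∑ r ∈ range (i+1), (-1:ℝ)^r * (m-n)^(i-r) /
              ((r.factorial:ℝ) * ((i-r+1).factorial:ℝ) * ((i-r).factorial:ℝ))) *
             (∑ r ∈ range (j+1), (-1:ℝ)^r * n^(j-r) /
              ((r.factorial:ℝ) * ((j-r+1).factorial:ℝ) * ((j-r).factorial:ℝ)))) := by ring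
        _ = _ := by
            rw [hexp, htK, Finset.sum_mul_sum, Finset.mul_sum]
            refine Finset.sum_congr rfl (fun a _ => ?_)
            rw [Finset.mul_sum]
            refine Finset.sum_congr rfl (fun b _ => ?_)
            ring
    rw [intervalIntegral.integral_congr (fun n _ => hprod n)]
    rw [intSum2 m (i+1) (j+1) _ (fun a _ => i - a) (fun _ b => j - b)]
    rw [Finset.mul_sum]
    refine Finset.sum_congr rfl (fun a ha => ?_)
    rw [Finset.mul_sum]
    refine Finset.sum_congr rfl (fun b hb => ?_)
    have ha' : a ≤ i := by simp only [Finset.mem_range] at ha; omega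
    have hb' : b ≤ j := by simp only [Finset.mem_range] at hb; omega
    rw [chooseFact ha', chooseFact hb', hg]
    simp only []
    rw [show (i-a) + (j-b) + 1 = K+1-(a+b) by omega]
    have e1 : ((a.factorial : ℕ) : ℝ) ≠ 0 := by positivity
    have e2 : (((i-a+1).factorial : ℕ) : ℝ) ≠ 0 := by positivity
    have e3 : (((i-a).factorial : ℕ) : ℝ) ≠ 0 := by positivity
    have e4 : ((b.factorial : ℕ) : ℝ) ≠ 0 := by positivity
    have e5 : (((j-b+1).factorial : ℕ) : ℝ) ≠ 0 := by positivity
    have e6 : (((j-b).factorial : ℕ) : ℝ) ≠ 0 := by positivity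
    have e7 : (((K+1-(a+b)).factorial : ℕ) : ℝ) ≠ 0 := by positivity
    field_simp
    ring
  -- the Ioi integral, per pair
  have hI2 : ∀ p ∈ Finset.HasAntidiagonal.antidiagonal K,
      u p.1 t m * ((-1:ℝ)^p.2 * t^p.2 / 2^p.2)
      = Real.exp (-m) * t^K / 2^K *
          (-(∑ a ∈ range (p.1+1), (((p.1+1).choose a : ℕ) : ℝ) * g (a+p.2+1))) := by
    intro p hp
    obtain ⟨i, j⟩ := p
    simp only [Finset.HasAntidiagonal.mem_antidiagonal] at hp
    simp only []
    rw [hu i t m, Finset.mul_sum, Finset.sum_mul]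
    rw [show Real.exp (-m) * t^K / 2^K *
          (-(∑ a ∈ range (i+1), (((i+1).choose a : ℕ) : ℝ) * g (a+j+1)))
        = ∑ a ∈ range (i+1), Real.exp (-m) * t^K / 2^K *
            (-((((i+1).choose a : ℕ) : ℝ) * g (a+j+1))) by
      rw [← Finset.sum_neg_distrib, ← Finset.mul_sum]]
    refine Finset.sum_congr rfl (fun a ha => ?_)
    have ha' : a ≤ i := by simp only [Finset.mem_range] at ha; omega
    rw [chooseFact ha', hg]
    simp only []
    rw [show K+1-(a+j+1) = i-a by omega, show K = i+j from hp.symm]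
    have e1 : ((a.factorial : ℕ) : ℝ) ≠ 0 := by positivity
    have e2 : (((i-a+1).factorial : ℕ) : ℝ) ≠ 0 := by positivity
    have e3 : (((i-a).factorial : ℕ) : ℝ) ≠ 0 := by positivity
    field_simp
    ring
  -- interchange for the two big integrals
  have hIntIoi : (∫ n in Set.Ioi (0:ℝ), ∑ p ∈ Finset.HasAntidiagonal.antidiagonal K, u p.1 t m * u p.2 t n)
      = ∑ p ∈ Finset.HasAntidiagonal.antidiagonal K, u p.1 t m * ((-1:ℝ)^p.2 * t^p.2 / 2^p.2) := by
    rw [MeasureTheory.integral_finset_sum _ (fun p _ => ((hUint p.2).const_mul _))]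
    refine Finset.sum_congr rfl (fun p _ => ?_)
    rw [MeasureTheory.integral_const_mul, hIoi p.2]
  have hIntI1 : (∫ n in (0:ℝ)..m, ∑ p ∈ Finset.HasAntidiagonal.antidiagonal K, u p.1 t (m-n) * u p.2 t n)
      = ∑ p ∈ Finset.HasAntidiagonal.antidiagonal K, ∫ n in (0:ℝ)..m, u p.1 t (m-n) * u p.2 t n := by
    refine intervalIntegral.integral_finset_sum (fun p _ => ?_)
    rw [hfun2 p]
    refine Continuous.intervalIntegrable ?_ _ _
    exact Continuous.mul ((hcf p.1).comp (continuous_const.sub continuous_id)) (hcf p.2)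
  -- the closed-form derivative
  have hA : (fun s : ℝ => u (K+1) s m) = fun s : ℝ =>
      (Real.exp (-m) * (((K+1)+1).factorial : ℝ) *
        (∑ r ∈ range ((K+1) + 1), (-1 : ℝ) ^ r * m ^ (K+1 - r) /
          ((r.factorial : ℝ) * ((K+1 - r + 1).factorial : ℝ) * ((K+1 - r).factorial : ℝ)))
        / 2^(K+1)) * s^(K+1) := by
    funext s
    rw [huk (K+1) (by omega) s m]
    ring
  have hd : HasDerivAt (fun s : ℝ =>
      (Real.exp (-m) * (((K+1)+1).factorial : ℝ) *
        (∑ r ∈ range ((K+1) + 1), (-1 : ℝ) ^ r * m ^ (K+1 - r) /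
          ((r.factorial : ℝ) * ((K+1 - r + 1).factorial : ℝ) * ((K+1 - r).factorial : ℝ)))
        / 2^(K+1)) * s^(K+1))
      ((Real.exp (-m) * (((K+1)+1).factorial : ℝ) *
        (∑ r ∈ range ((K+1) + 1), (-1 : ℝ) ^ r * m ^ (K+1 - r) /
          ((r.factorial : ℝ) * ((K+1 - r + 1).factorial : ℝ) * ((K+1 - r).factorial : ℝ)))
        / 2^(K+1)) * (((K:ℝ)+1) * t^K)) t := by
    have := (hasDerivAt_pow (K+1) t).const_mul
      (Real.exp (-m) * (((K+1)+1).factorial : ℝ) *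
        (∑ r ∈ range ((K+1) + 1), (-1 : ℝ) ^ r * m ^ (K+1 - r) /
          ((r.factorial : ℝ) * ((K+1 - r + 1).factorial : ℝ) * ((K+1 - r).factorial : ℝ)))
        / 2^(K+1))
    simpa using this
  rw [hA]
  convert hd using 1
  -- now the value computation
  have hW : (((K+1)+1).factorial : ℝ) *
      (∑ r ∈ range ((K+1) + 1), (-1 : ℝ) ^ r * m ^ (K+1 - r) /
        ((r.factorial : ℝ) * ((K+1 - r + 1).factorial : ℝ) * ((K+1 - r).factorial : ℝ)))
      = ∑ r ∈ range (K+2), (((K+2).choose r : ℕ) : ℝ) * g r := by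
    rw [Finset.mul_sum]
    refine Finset.sum_congr (by norm_num) (fun r hr => ?_)
    have hr' : r ≤ K+1 := by simp only [Finset.mem_range] at hr; omega
    rw [show K+2 = (K+1)+1 from rfl, chooseFact hr', hg]
    simp only []
    have e1 : ((r.factorial : ℕ) : ℝ) ≠ 0 := by positivity
    have e2 : (((K+1-r+1).factorial : ℕ) : ℝ) ≠ 0 := by positivity
    have e3 : (((K+1-r).factorial : ℕ) : ℝ) ≠ 0 := by positivity
    field_simp
    try ring
  calc (1:ℝ)/2 * (∫ n in (0:ℝ)..m, ∑ p ∈ Finset.HasAntidiagonal.antidiagonal K, u p.1 t (m-n) * u p.2 t n)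
        - ∫ n in Set.Ioi (0:ℝ), ∑ p ∈ Finset.HasAntidiagonal.antidiagonal K, u p.1 t m * u p.2 t n
      = 1/2 * (∑ p ∈ Finset.HasAntidiagonal.antidiagonal K,
            Real.exp (-m) * t^K / 2^K * (∑ a ∈ range (p.1+1), ∑ b ∈ range (p.2+1),
              (((p.1+1).choose a : ℕ) : ℝ) * (((p.2+1).choose b : ℕ) : ℝ) * g (a+b)))
          - ∑ p ∈ Finset.HasAntidiagonal.antidiagonal K, Real.exp (-m) * t^K / 2^K *
              (-(∑ a ∈ range (p.1+1), (((p.1+1).choose a : ℕ) : ℝ) * g (a+p.2+1))) := by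
        rw [hIntI1, Finset.sum_congr rfl hI1, hIntIoi, Finset.sum_congr rfl hI2]
    _ = Real.exp (-m) * t^K / 2^(K+1) * ∑ p ∈ Finset.HasAntidiagonal.antidiagonal K,
          ((∑ a ∈ range (p.1+1), ∑ b ∈ range (p.2+1),
              (((p.1+1).choose a : ℕ) : ℝ) * (((p.2+1).choose b : ℕ) : ℝ) * g (a+b))
            + 2 * ∑ a ∈ range (p.1+1), (((p.1+1).choose a : ℕ) : ℝ) * g (a+p.2+1)) := by
        rw [Finset.mul_sum, Finset.mul_sum, ← Finset.sum_sub_distrib]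
        refine Finset.sum_congr rfl (fun p _ => ?_)
        ring
    _ = Real.exp (-m) * t^K / 2^(K+1) * (((K:ℝ)+1) * ∑ r ∈ range (K+2),
          (((K+2).choose r : ℕ) : ℝ) * g r) := by rw [combMain K g]
    _ = _ := by
        rw [← hW]
        ring
end

section
/- Let u_0(t,m) = exp(-m), u_1(t,m) = (1/2)*exp(-m)*t*(m^2 - 2m - 2), and u_2(t,m) = (1/12)*exp(-m)*t^2*(m^4 - 6m^3 - 3m^2 + 18m + 6). Then u_1(0,m) = u_2(0,m) = 0 and for all t ≥ 0, m > 0: (i) ∂u_1/∂t(t,m) = (1/2)∫_0^m m * u_0(t,m-n) * u_0(t,n) dn - ∫_0^∞ (m+n) * u_0(t,m) * u_0(t,n) dn, and (ii) ∂u_2/∂t(t,m) = (1/2)∫_0^m m * [u_0(t,m-n) u_1(t,n) + u_1(t,m-n) u_0(t,n)] dn - ∫_0^∞ (m+n) * [u_0(t,m) u_1(t,n) + u_1(t,m) u_0(t,n)] dn. -/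
open Real MeasureTheory

lemma moment_int (k : ℕ) :
    IntegrableOn (fun x : ℝ => x ^ k * Real.exp (-x)) (Set.Ioi 0) := by
  have h := Real.GammaIntegral_convergent (show (0:ℝ) < (k:ℝ) + 1 by positivity)
  have e : (fun x : ℝ => Real.exp (-x) * x ^ ((k:ℝ) + 1 - 1)) =
      fun x : ℝ => x ^ k * Real.exp (-x) := by
    funext x
    rw [show (k:ℝ) + 1 - 1 = (k:ℝ) by ring, Real.rpow_natCast]
    ring
  rwa [e] at h

lemma moment_val (k : ℕ) :
    ∫ x in Set.Ioi (0:ℝ), x ^ k * Real.exp (-x) = (Nat.factorial k : ℝ) := by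
  have h := Real.Gamma_eq_integral (show (0:ℝ) < (k:ℝ) + 1 by positivity)
  rw [Real.Gamma_nat_eq_factorial] at h
  rw [h]
  congr 1
  funext x
  rw [show (k:ℝ) + 1 - 1 = (k:ℝ) by ring, Real.rpow_natCast]
  ring

lemma ioi_poly_exp (a b c d : ℝ) :
    ∫ n in Set.Ioi (0:ℝ), (a + b * n + c * n ^ 2 + d * n ^ 3) * Real.exp (-n)
      = a + b + 2 * c + 6 * d := by
  have Ia := (moment_int 0).const_mul a
  have Ib := (moment_int 1).const_mul b
  have Ic := (moment_int 2).const_mul c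
  have Id := (moment_int 3).const_mul d
  have Iab : Integrable (fun n : ℝ => a * (n ^ 0 * Real.exp (-n)) +
      b * (n ^ 1 * Real.exp (-n))) (volume.restrict (Set.Ioi 0)) := Ia.add Ib
  have Icd : Integrable (fun n : ℝ => c * (n ^ 2 * Real.exp (-n)) +
      d * (n ^ 3 * Real.exp (-n))) (volume.restrict (Set.Ioi 0)) := Ic.add Id
  have e : (fun n : ℝ => (a + b * n + c * n ^ 2 + d * n ^ 3) * Real.exp (-n)) =
      fun n => (a * (n ^ 0 * Real.exp (-n)) + b * (n ^ 1 * Real.exp (-n))) +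
        (c * (n ^ 2 * Real.exp (-n)) + d * (n ^ 3 * Real.exp (-n))) := by
    funext n; ring
  rw [e, integral_add Iab Icd, integral_add Ia Ib, integral_add Ic Id,
    integral_const_mul, integral_const_mul, integral_const_mul, integral_const_mul,
    moment_val 0, moment_val 1, moment_val 2, moment_val 3]
  simp [Nat.factorial]
  ring

lemma interval_poly (a b c m : ℝ) :
    ∫ n in (0:ℝ)..m, (a + b * n + c * n ^ 2)
      = a * m + b * m ^ 2 / 2 + c * m ^ 3 / 3 := by
  have h1 : IntervalIntegrable (fun n : ℝ => a + b * n) volume 0 m :=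
    (continuous_const.add (continuous_const.mul continuous_id)).intervalIntegrable 0 m
  have h2 : IntervalIntegrable (fun n : ℝ => c * n ^ 2) volume 0 m :=
    (continuous_const.mul (continuous_pow 2)).intervalIntegrable 0 m
  have h3 : IntervalIntegrable (fun n : ℝ => (a : ℝ)) volume 0 m :=
    continuous_const.intervalIntegrable 0 m
  have h4 : IntervalIntegrable (fun n : ℝ => b * n) volume 0 m :=
    (continuous_const.mul continuous_id).intervalIntegrable 0 m
  rw [intervalIntegral.integral_add h1 h2, intervalIntegral.integral_add h3 h4,
    intervalIntegral.integral_const, intervalIntegral.integral_const_mul,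
    intervalIntegral.integral_const_mul]
  simp [integral_pow, integral_id, smul_eq_mul]
  ring

/-- The first two nontrivial HPM coefficients for the sum-kernel Smoluchowski equation
with exponential initial condition satisfy the HPM recursion. -/
theorem stmt_11 (u₀ u₁ u₂ : ℝ → ℝ → ℝ)
    (h₀ : ∀ t m : ℝ, u₀ t m = Real.exp (-m))
    (h₁ : ∀ t m : ℝ, u₁ t m = (1 / 2) * Real.exp (-m) * t * (m ^ 2 - 2 * m - 2))
    (h₂ : ∀ t m : ℝ, u₂ t m = (1 / 12) * Real.exp (-m) * t ^ 2 *
      (m ^ 4 - 6 * m ^ 3 - 3 * m ^ 2 + 18 * m + 6)) :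
    (∀ m : ℝ, 0 < m → u₁ 0 m = 0 ∧ u₂ 0 m = 0) ∧
    (∀ t : ℝ, 0 ≤ t → ∀ m : ℝ, 0 < m →
      HasDerivAt (fun s => u₁ s m)
        ((1 / 2) * (∫ n in (0:ℝ)..m, m * u₀ t (m - n) * u₀ t n) -
          ∫ n in Set.Ioi (0:ℝ), (m + n) * u₀ t m * u₀ t n) t) ∧
    (∀ t : ℝ, 0 ≤ t → ∀ m : ℝ, 0 < m →
      HasDerivAt (fun s => u₂ s m)
        ((1 / 2) * (∫ n in (0:ℝ)..m,
            m * (u₀ t (m - n) * u₁ t n + u₁ t (m - n) * u₀ t n)) -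
          ∫ n in Set.Ioi (0:ℝ),
            (m + n) * (u₀ t m * u₁ t n + u₁ t m * u₀ t n)) t) := by
  refine ⟨fun m hm => ⟨by rw [h₁]; ring, by rw [h₂]; ring⟩, ?_, ?_⟩
  · intro t ht m hm
    -- interval integral
    have hiv : (∫ n in (0:ℝ)..m, m * u₀ t (m - n) * u₀ t n)
        = m ^ 2 * Real.exp (-m) := by
      have e : (fun n : ℝ => m * u₀ t (m - n) * u₀ t n)
          = fun _ => m * Real.exp (-m) := by
        funext n
        rw [h₀, h₀, mul_assoc, ← Real.exp_add]
        ring_nf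
      rw [intervalIntegral.integral_congr (fun n _ => congrFun e n)]
      rw [intervalIntegral.integral_const, smul_eq_mul]
      ring
    have hio : (∫ n in Set.Ioi (0:ℝ), (m + n) * u₀ t m * u₀ t n)
        = (m + 1) * Real.exp (-m) := by
      have e : (fun n : ℝ => (m + n) * u₀ t m * u₀ t n)
          = fun n => (m * Real.exp (-m) + Real.exp (-m) * n
            + 0 * n ^ 2 + 0 * n ^ 3) * Real.exp (-n) := by
        funext n; rw [h₀, h₀]; ring
      rw [e, ioi_poly_exp]; ring
    have key : HasDerivAt (fun s => u₁ s m)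
        ((1/2) * Real.exp (-m) * (m ^ 2 - 2 * m - 2)) t := by
      have e : (fun s => u₁ s m)
          = fun s => ((1/2) * Real.exp (-m) * (m ^ 2 - 2 * m - 2)) * s := by
        funext s; rw [h₁]; ring
      rw [e]
      simpa using (hasDerivAt_id t).const_mul
        ((1/2) * Real.exp (-m) * (m ^ 2 - 2 * m - 2))
    convert key using 1
    rw [hiv, hio]; ring
  · intro t ht m hm
    have hiv : (∫ n in (0:ℝ)..m,
        m * (u₀ t (m - n) * u₁ t n + u₁ t (m - n) * u₀ t n))
        = m * Real.exp (-m) * (t / 2) * ((2/3) * m ^ 3 - 2 * m ^ 2 - 4 * m) := by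
      have e : ∀ n : ℝ, m * (u₀ t (m - n) * u₁ t n + u₁ t (m - n) * u₀ t n)
          = m * Real.exp (-m) * (t / 2) *
            ((m ^ 2 - 2 * m - 4) + (-2 * m) * n + 2 * n ^ 2) := by
        intro n
        rw [h₀, h₀, h₁, h₁]
        have hE : Real.exp (-(m - n)) * Real.exp (-n) = Real.exp (-m) := by
          rw [← Real.exp_add]; ring_nf
        linear_combination ((t / 2) * m *
          ((n ^ 2 - 2 * n - 2) + ((m - n) ^ 2 - 2 * (m - n) - 2))) * hE
      rw [intervalIntegral.integral_congr (fun n _ => e n)]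
      have e2 : (fun n : ℝ => m * Real.exp (-m) * (t / 2) *
            ((m ^ 2 - 2 * m - 4) + (-2 * m) * n + 2 * n ^ 2))
          = fun n => m * Real.exp (-m) * (t / 2) *
            ((m ^ 2 - 2 * m - 4) + (-2 * m) * n + 2 * n ^ 2) := rfl
      rw [intervalIntegral.integral_const_mul, interval_poly]
      ring
    have hio : (∫ n in Set.Ioi (0:ℝ),
        (m + n) * (u₀ t m * u₁ t n + u₁ t m * u₀ t n))
        = Real.exp (-m) * (t / 2) * (m ^ 3 - m ^ 2 - 6 * m - 2) := by
      have A := m ^ 2 - 2 * m - 2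
      have e : (fun n : ℝ => (m + n) * (u₀ t m * u₁ t n + u₁ t m * u₀ t n))
          = fun n => (Real.exp (-m) * (t / 2) * (m * (m ^ 2 - 2 * m - 2) - 2 * m)
            + (Real.exp (-m) * (t / 2) * ((m ^ 2 - 2 * m - 2) - 2 * m - 2)) * n
            + (Real.exp (-m) * (t / 2) * (m - 2)) * n ^ 2
            + (Real.exp (-m) * (t / 2)) * n ^ 3) * Real.exp (-n) := by
        funext n; rw [h₀, h₀, h₁, h₁]; ring
      rw [e, ioi_poly_exp]; ring
    have key : HasDerivAt (fun s => u₂ s m)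
        ((1/12) * Real.exp (-m) *
          (m ^ 4 - 6 * m ^ 3 - 3 * m ^ 2 + 18 * m + 6) * (2 * t)) t := by
      have e : (fun s => u₂ s m)
          = fun s => ((1/12) * Real.exp (-m) *
            (m ^ 4 - 6 * m ^ 3 - 3 * m ^ 2 + 18 * m + 6)) * s ^ 2 := by
        funext s; rw [h₂]; ring
      rw [e]
      simpa using (hasDerivAt_pow 2 t).const_mul
        ((1/12) * Real.exp (-m) * (m ^ 4 - 6 * m ^ 3 - 3 * m ^ 2 + 18 * m + 6))
    convert key using 1
    rw [hiv, hio]; ring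
end

section
/- For all real t and m, the double series Σ_{k=0}^∞ (m*t)^k * [ Σ_{r=0}^k (-1)^r * m^(k-r) / (r! * (k-r+1)! * (k-r)!) ] converges and equals exp(-t*m) * Σ_{j=0}^∞ t^j * m^(2j) / (j! * (j+1)!). -/
open Real MeasureTheory

lemma gsum_aux (t m : ℝ) : Summable (fun j : ℕ => t ^ j * m ^ (2 * j) /
      ((Nat.factorial j : ℝ) * (Nat.factorial (j + 1) : ℝ))) := by
  apply Summable.of_norm
  refine Summable.of_nonneg_of_le (fun j => norm_nonneg _) (fun j => ?_)
    (Real.summable_pow_div_factorial |t * m ^ 2|)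
  rw [Real.norm_eq_abs, abs_div]
  have h1 : |t ^ j * m ^ (2 * j)| = |t * m ^ 2| ^ j := by
    rw [abs_mul, abs_pow, abs_pow, abs_mul, abs_pow, mul_pow, pow_mul]
  have h2 : |((Nat.factorial j : ℝ) * (Nat.factorial (j + 1) : ℝ))| =
      (Nat.factorial j : ℝ) * (Nat.factorial (j + 1) : ℝ) := by
    apply abs_of_pos; positivity
  rw [h1, h2]
  apply div_le_div_of_nonneg_left (by positivity) (by positivity)
  exact le_mul_of_one_le_right (by positivity)
    (by exact_mod_cast Nat.one_le_iff_ne_zero.mpr (Nat.factorial_ne_zero _))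

/-- The HPM series for the product-kernel Smoluchowski equation with initial condition
`exp(-m)/m` sums to the Bessel-type series of the exact solution. -/
theorem stmt_15 (t m : ℝ) :
    Summable (fun j : ℕ => t ^ j * m ^ (2 * j) /
      ((Nat.factorial j : ℝ) * (Nat.factorial (j + 1) : ℝ))) ∧
    HasSum (fun k : ℕ => (m * t) ^ k *
        ∑ r ∈ Finset.range (k + 1), (-1 : ℝ) ^ r * m ^ (k - r) /
          ((Nat.factorial r : ℝ) * (Nat.factorial (k - r + 1) : ℝ) *
            (Nat.factorial (k - r) : ℝ)))
      (Real.exp (-t * m) * ∑' j : ℕ, t ^ j * m ^ (2 * j) /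
        ((Nat.factorial j : ℝ) * (Nat.factorial (j + 1) : ℝ))) := by
  have hg := gsum_aux t m
  refine ⟨hg, ?_⟩
  set g : ℕ → ℝ := fun j => t ^ j * m ^ (2 * j) /
      ((Nat.factorial j : ℝ) * (Nat.factorial (j + 1) : ℝ)) with hgdef
  set f : ℕ → ℝ := fun r => (-t * m) ^ r / (Nat.factorial r : ℝ) with hfdef
  have hf : HasSum f (Real.exp (-t * m)) := by
    rw [Real.exp_eq_exp_ℝ]
    exact NormedSpace.expSeries_div_hasSum_exp (-t * m)
  have hfnorm : Summable fun r : ℕ => ‖f r‖ := by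
    have := Real.summable_pow_div_factorial |(-t * m)|
    refine this.congr fun r => ?_
    simp [hfdef, abs_div, abs_pow, abs_mul]
  have hgnorm : Summable fun j : ℕ => ‖g j‖ := by
    simpa [Real.norm_eq_abs] using (summable_abs_iff.mpr hg)
  have hS : Summable (fun n => ∑ kl ∈ Finset.HasAntidiagonal.antidiagonal n, f kl.1 * g kl.2) :=
    (summable_norm_sum_mul_antidiagonal_of_summable_norm hfnorm hgnorm).of_norm
  have htsum : (∑' n, ∑ kl ∈ Finset.HasAntidiagonal.antidiagonal n, f kl.1 * g kl.2) =
      Real.exp (-t * m) * ∑' j, g j := by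
    rw [← tsum_mul_tsum_eq_tsum_sum_antidiagonal_of_summable_norm hfnorm hgnorm, hf.tsum_eq]
  have key : HasSum (fun n => ∑ kl ∈ Finset.HasAntidiagonal.antidiagonal n, f kl.1 * g kl.2)
      (Real.exp (-t * m) * ∑' j, g j) := htsum ▸ hS.hasSum
  have heq : (fun k : ℕ => (m * t) ^ k *
        ∑ r ∈ Finset.range (k + 1), (-1 : ℝ) ^ r * m ^ (k - r) /
          ((Nat.factorial r : ℝ) * (Nat.factorial (k - r + 1) : ℝ) *
            (Nat.factorial (k - r) : ℝ))) =
      fun n => ∑ kl ∈ Finset.HasAntidiagonal.antidiagonal n, f kl.1 * g kl.2 := by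
    funext k
    rw [Finset.Nat.sum_antidiagonal_eq_sum_range_succ_mk, Finset.mul_sum]
    refine Finset.sum_congr rfl fun r hr => ?_
    rw [Finset.mem_range, Nat.lt_succ_iff] at hr
    obtain ⟨j, rfl⟩ := Nat.exists_eq_add_of_le hr
    simp only [hfdef, hgdef, Nat.add_sub_cancel_left]
    have h1 : (Nat.factorial r : ℝ) ≠ 0 := Nat.cast_ne_zero.mpr (Nat.factorial_ne_zero r)
    have h2 : (Nat.factorial j : ℝ) ≠ 0 := Nat.cast_ne_zero.mpr (Nat.factorial_ne_zero j)
    have h3 : (Nat.factorial (j + 1) : ℝ) ≠ 0 := Nat.cast_ne_zero.mpr (Nat.factorial_ne_zero _)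
    field_simp
    ring
  rw [heq]
  exact key
end
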